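/- arXiv:2412.20001 — 7 statements merged into one kernel-verified Lean document; each statement's English description precedes it below -/
import Mathlib

section
/- For every signed graph (G,σ) with no negative loops, χ_b(G,σ) = min over all signatures σ' switching equivalent to σ of χ((G,σ')⁻), where (G,σ')⁻ is the subgraph of G induced by the negative edges of σ'. -/
/-- A set `S` of vertices of a signed graph (given by its positive and negative adjacency
relations) is balanced if some switching makes all edges inside `S` positive, i.e. there is a
set `X` such that positive edges inside `S` do not cross `X` and negative edges inside `S`
cross `X`. -/
def IsBalancedSet {V : Type*} (pos neg : V → V → Prop) (S : Set V) : Prop :=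
  ∃ X : Set V, ∀ u ∈ S, ∀ v ∈ S,
    (pos u v → ((u ∈ X) ↔ (v ∈ X))) ∧ (neg u v → ¬((u ∈ X) ↔ (v ∈ X)))

/-- The balanced chromatic number: the least `p` such that the vertex set can be partitioned
into `p` balanced sets. -/
noncomputable def balancedChromatic {V : Type*} (pos neg : V → V → Prop) : ℕ :=
  sInf {p : ℕ | ∃ f : V → Fin p, ∀ i : Fin p, IsBalancedSet pos neg (f ⁻¹' {i})}

/-- The (ordinary) chromatic number of a graph given by its adjacency relation: the least `m`
admitting a proper colouring with `m` colours. -/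
noncomputable def chromNum {V : Type*} (adj : V → V → Prop) : ℕ :=
  sInf {m : ℕ | ∃ c : V → Fin m, ∀ u v : V, adj u v → c u ≠ c v}

/-! A vertex set is balanced exactly when some switching makes every edge inside it positive.
Given a partition into balanced classes, the switchings of the individual classes glue to a
single switching of the whole graph because the classes are disjoint; under it no negative
edge joins two vertices of the same class, so the partition is a proper colouring of the
negative subgraph. Conversely, the colour classes of a proper colouring of the negative
subgraph of a switching of `σ` are balanced, witnessed by that switching. -/

open Classical in
noncomputable def switch {V : Type*} (σ : V → V → Bool) (X : Set V) : V → V → Bool :=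
  fun u v => if (u ∈ X ↔ v ∈ X) then σ u v else !σ u v

section Switching

variable {V ι : Type*} {G : SimpleGraph V} {σ σ' : V → V → Bool} {X Y : Set V}

theorem switch_eq_self_iff (u v : V) : switch σ X u v = σ u v ↔ (u ∈ X ↔ v ∈ X) := by
  unfold switch
  split_ifs with h <;> simp [h]

theorem eq_switch_of_forall_eq_iff (h : ∀ u v, σ' u v = σ u v ↔ (u ∈ X ↔ v ∈ X)) :
    σ' = switch σ X := by
  funext u v
  have hsame := (h u v).trans (switch_eq_self_iff (σ := σ) u v).symm
  revert hsame
  cases σ' u v <;> cases switch σ X u v <;> cases σ u v <;> decide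

theorem switch_congr {u v : V} (hu : u ∈ X ↔ u ∈ Y) (hv : v ∈ X ↔ v ∈ Y) :
    switch σ X u v = switch σ Y u v := by
  unfold switch
  split_ifs <;> first | rfl | (exfalso; tauto)

theorem isBalancedSet_iff_exists_switch_eq_true {S : Set V} :
    IsBalancedSet (fun u v => G.Adj u v ∧ σ u v = true) (fun u v => G.Adj u v ∧ σ u v = false) S ↔
      ∃ X : Set V, ∀ u ∈ S, ∀ v ∈ S, G.Adj u v → switch σ X u v = true := by
  refine exists_congr fun X => forall₂_congr fun u _ => forall₂_congr fun v _ => ?_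
  have hs := switch_eq_self_iff (σ := σ) (X := X) u v
  cases hσ : σ u v <;> rw [hσ] at hs <;> simp [hσ, ← hs]

theorem forall_isBalancedSet_fiber_iff (f : V → ι) :
    (∀ i, IsBalancedSet (fun u v => G.Adj u v ∧ σ u v = true)
        (fun u v => G.Adj u v ∧ σ u v = false) (f ⁻¹' {i})) ↔
      ∃ X : Set V, ∀ u v, G.Adj u v → switch σ X u v = false → f u ≠ f v := by
  simp only [isBalancedSet_iff_exists_switch_eq_true]
  constructor
  · intro hf
    choose X hX using hf
    refine ⟨{v | v ∈ X (f v)}, fun u v hadj hneg hfuv => ?_⟩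
    have hglue : switch σ {v | v ∈ X (f v)} u v = switch σ (X (f v)) u v :=
      switch_congr (by simp [hfuv]) Iff.rfl
    rw [hglue, hX (f v) u hfuv v rfl hadj] at hneg
    contradiction
  · rintro ⟨X, hX⟩ i
    refine ⟨X, fun u hu v hv hadj => ?_⟩
    by_contra hneg
    exact hX u v hadj (by simpa using hneg) (hu.trans hv.symm)

end Switching

theorem balancedChromatic_eq_min_chrom_negativeSubgraph_general {V : Type*}
    (G : SimpleGraph V) (σ : V → V → Bool) :
    balancedChromatic (fun u v => G.Adj u v ∧ σ u v = true)
        (fun u v => G.Adj u v ∧ σ u v = false) =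
    sInf {m : ℕ | ∃ σ' : V → V → Bool,
        (∃ X : Set V, ∀ u v : V, (σ' u v = σ u v) ↔ ((u ∈ X) ↔ (v ∈ X))) ∧
        ∃ c : V → Fin m, ∀ u v : V, G.Adj u v → σ' u v = false → c u ≠ c v} := by
  unfold balancedChromatic
  congr 1
  ext m
  simp only [Set.mem_ofPred_eq, forall_isBalancedSet_fiber_iff]
  constructor
  · rintro ⟨c, X, hc⟩
    exact ⟨switch σ X, ⟨X, switch_eq_self_iff⟩, c, hc⟩
  · rintro ⟨σ', ⟨X, hX⟩, c, hc⟩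
    exact ⟨c, X, eq_switch_of_forall_eq_iff hX ▸ hc⟩

/-- for every signed graph `(G,σ)`,
`χ_b(G,σ) = min_{σ' ≡ σ} χ((G,σ')⁻)`, the minimum over all signatures switching equivalent to
`σ` of the chromatic number of the subgraph induced by the negative edges of `σ'`. -/
theorem balancedChromatic_eq_min_chrom_negativeSubgraph {V : Type*} [Fintype V]
    (G : SimpleGraph V) (σ : V → V → Bool) (hsym : ∀ u v, σ u v = σ v u) :
    balancedChromatic (fun u v => G.Adj u v ∧ σ u v = true)
        (fun u v => G.Adj u v ∧ σ u v = false) =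
    sInf {m : ℕ | ∃ σ' : V → V → Bool,
        (∃ X : Set V, ∀ u v : V, (σ' u v = σ u v) ↔ ((u ∈ X) ↔ (v ∈ X))) ∧
        ∃ c : V → Fin m, ∀ u v : V, G.Adj u v → σ' u v = false → c u ≠ c v} :=
  balancedChromatic_eq_min_chrom_negativeSubgraph_general G σ
end

section
/- For n ≥ k ≥ 1, the family of sets B_i(n,k) = {A ∈ ([n] choose ±k) : A ∩ {i,−i} ≠ ∅} for i ∈ [n] satisfies: each B_i(n,k) is a balanced set in the signed Kneser graph KS(n,k), and any n−k+1 of them cover all vertices; hence χ_b(KS(n,k)) ≤ n−k+1. -/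
/-- A signed `k`-subset of `[n]`: a `k`-subset `A` of `{±1,…,±n}` with `A ∩ (−A) = ∅`. -/
def IsSignedKSubset (n k : ℕ) (A : Finset ℤ) : Prop :=
  A.card = k ∧ (∀ a ∈ A, a ≠ 0 ∧ a.natAbs ≤ n) ∧ ∀ a ∈ A, -a ∉ A

/-- A set of nonzero integers is alternating if any two of its elements that are consecutive
in absolute value have opposite signs. -/
def IsAlternating (A : Finset ℤ) : Prop :=
  ∀ a ∈ A, ∀ b ∈ A, a.natAbs < b.natAbs →
    (∀ c ∈ A, ¬(a.natAbs < c.natAbs ∧ c.natAbs < b.natAbs)) → (0 < a ↔ b < 0)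

/-- The element of smallest absolute value is positive. -/
def FirstPos (A : Finset ℤ) : Prop :=
  ∀ a ∈ A, (∀ b ∈ A, a.natAbs ≤ b.natAbs) → 0 < a

/-- Positive adjacency in the signed Kneser graph: `A ∩ (−B) = ∅`. -/
def ksPos (A B : Finset ℤ) : Prop := ∀ a ∈ A, -a ∉ B

/-- Negative adjacency in the signed Kneser graph: `A ∩ B = ∅`. -/
def ksNeg (A B : Finset ℤ) : Prop := Disjoint A B

/-- The vertices of the signed Kneser graph `KS(n,k)`. -/
def KSVertex (n k : ℕ) : Type := {A : Finset ℤ // IsSignedKSubset n k A}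

/-!
Switching by `X = {A | i ∈ A}` makes every edge inside `B_i` positive: two vertices of `B_i`
are joined positively only if they contain the same element of `{i, −i}`, and negatively only
if they contain different ones. A vertex `A` has `k` distinct absolute values in `[n]`, so it
meets any `n − k + 1` of the pairs `{i, −i}` (pigeonhole in `[n]`). In particular
`B_1, …, B_{n−k+1}` cover the vertices, and sending each vertex to one of these sets containing
it is a partition into `n − k + 1` balanced sets.
-/

open Finset

theorem IsBalancedSet.mono {V : Type*} {pos neg : V → V → Prop} {S T : Set V}
    (h : IsBalancedSet pos neg T) (hST : S ⊆ T) : IsBalancedSet pos neg S := by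
  obtain ⟨X, hX⟩ := h
  exact ⟨X, fun u hu v hv => hX u (hST hu) v (hST hv)⟩

theorem IsBalancedSet.preimage {V W : Type*} {pos neg : W → W → Prop} {S : Set W}
    (h : IsBalancedSet pos neg S) (f : V → W) :
    IsBalancedSet (fun u v => pos (f u) (f v)) (fun u v => neg (f u) (f v)) (f ⁻¹' S) := by
  obtain ⟨X, hX⟩ := h
  exact ⟨f ⁻¹' X, fun u hu v hv => hX (f u) hu (f v) hv⟩

theorem balancedChromatic_le_of_forall_exists_mem {V : Type*} {pos neg : V → V → Prop} {p : ℕ}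
    (S : Fin p → Set V) (hS : ∀ i, IsBalancedSet pos neg (S i)) (hcover : ∀ v, ∃ i, v ∈ S i) :
    balancedChromatic pos neg ≤ p := by
  choose f hf using hcover
  refine Nat.sInf_le ⟨f, fun i => (hS i).mono ?_⟩
  rintro v rfl
  exact hf v

theorem isBalancedSet_ksPos_ksNeg_setOf_mem_or_neg_mem (i : ℤ) :
    IsBalancedSet ksPos ksNeg {A : Finset ℤ | i ∈ A ∨ -i ∈ A} := by
  refine ⟨{A | i ∈ A}, fun u hu v hv => ⟨fun hpos => ?_, fun hneg hiff => ?_⟩⟩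
  · simp only [Set.mem_ofPred_eq]
    constructor
    · intro hiu
      exact hv.resolve_right (hpos i hiu)
    · intro hiv
      refine hu.resolve_right fun hiu => ?_
      exact hpos (-i) hiu (by rwa [neg_neg])
  · simp only [Set.mem_ofPred_eq] at hiff
    by_cases hiu : i ∈ u
    · exact disjoint_left.mp hneg hiu (hiff.mp hiu)
    · have hiv : i ∉ v := mt hiff.mpr hiu
      exact disjoint_left.mp hneg (hu.resolve_left hiu) (hv.resolve_left hiv)

namespace IsSignedKSubset

variable {n k : ℕ} {A : Finset ℤ}

theorem card_image_natAbs (hA : IsSignedKSubset n k A) : #(A.image Int.natAbs) = k := by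
  rw [card_image_of_injOn, hA.1]
  intro a ha b hb hab
  rcases Int.natAbs_eq_natAbs_iff.mp hab with h | h
  · exact h
  · exact absurd (show -a ∈ A by rwa [h, neg_neg]) (hA.2.2 a ha)

theorem image_natAbs_subset (hA : IsSignedKSubset n k A) : A.image Int.natAbs ⊆ Icc 1 n := by
  intro j hj
  obtain ⟨a, ha, rfl⟩ := mem_image.mp hj
  obtain ⟨ha0, han⟩ := hA.2.1 a ha
  exact mem_Icc.mpr ⟨Int.natAbs_pos.mpr ha0, han⟩

theorem le (hA : IsSignedKSubset n k A) : k ≤ n := by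
  simpa [hA.card_image_natAbs] using card_le_card hA.image_natAbs_subset

theorem exists_mem_or_neg_mem {I : Finset ℕ} (hA : IsSignedKSubset n k A) (hI : I ⊆ Icc 1 n)
    (hcard : n - k < #I) : ∃ i ∈ I, (i : ℤ) ∈ A ∨ -(i : ℤ) ∈ A := by
  have hlt : #(Icc 1 n) < #I + #(A.image Int.natAbs) := by
    simp only [Nat.card_Icc, hA.card_image_natAbs]
    omega
  obtain ⟨i, hi⟩ := inter_nonempty_of_card_lt_card_add_card hI hA.image_natAbs_subset hlt
  obtain ⟨hiI, hiA⟩ := mem_inter.mp hi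
  obtain ⟨a, ha, rfl⟩ := mem_image.mp hiA
  refine ⟨a.natAbs, hiI, ?_⟩
  rcases Int.natAbs_eq a with h | h
  · exact .inl (h ▸ ha)
  · exact .inr (h ▸ ha)

end IsSignedKSubset

theorem signedKneser_upper_bound_general (n k : ℕ) (hk : 1 ≤ k) :
    (∀ i ∈ Finset.Icc 1 n,
        IsBalancedSet (fun A B : KSVertex n k => ksPos A.1 B.1)
          (fun A B : KSVertex n k => ksNeg A.1 B.1)
          {A : KSVertex n k | (i : ℤ) ∈ A.1 ∨ -(i : ℤ) ∈ A.1}) ∧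
    (∀ I : Finset ℕ, I ⊆ Finset.Icc 1 n → I.card = n - k + 1 →
        ∀ A : KSVertex n k, ∃ i ∈ I, (i : ℤ) ∈ A.1 ∨ -(i : ℤ) ∈ A.1) ∧
    balancedChromatic (fun A B : KSVertex n k => ksPos A.1 B.1)
        (fun A B : KSVertex n k => ksNeg A.1 B.1) ≤ n - k + 1 := by
  have balanced (i : ℤ) := (isBalancedSet_ksPos_ksNeg_setOf_mem_or_neg_mem i).preimage
    (Subtype.val : KSVertex n k → Finset ℤ)
  refine ⟨fun i _ => balanced i, fun I hI hcard A => A.2.exists_mem_or_neg_mem hI (by omega), ?_⟩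
  refine balancedChromatic_le_of_forall_exists_mem (fun j : Fin (n - k + 1) =>
      {A : KSVertex n k | ((j + 1 : ℕ) : ℤ) ∈ A.1 ∨ -((j + 1 : ℕ) : ℤ) ∈ A.1})
    (fun j => balanced _) fun A => ?_
  have hkn := A.2.le
  obtain ⟨i, hi, hiA⟩ :=
    A.2.exists_mem_or_neg_mem (I := Icc 1 (n - k + 1)) (Icc_subset_Icc_right (by omega)) (by simp)
  obtain ⟨hi1, hik⟩ := mem_Icc.mp hi
  exact ⟨⟨i - 1, by omega⟩, by rwa [Nat.sub_add_cancel hi1]⟩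

/-- each set `B_i(n,k) = {A : A ∩ {i,−i} ≠ ∅}` is balanced in `KS(n,k)`, any
`n−k+1` of them cover all vertices, and hence `χ_b(KS(n,k)) ≤ n−k+1`. -/
theorem signedKneser_upper_bound (n k : ℕ) (hk : 1 ≤ k) (hkn : k ≤ n) :
    (∀ i ∈ Finset.Icc 1 n,
        IsBalancedSet (fun A B : KSVertex n k => ksPos A.1 B.1)
          (fun A B : KSVertex n k => ksNeg A.1 B.1)
          {A : KSVertex n k | (i : ℤ) ∈ A.1 ∨ -(i : ℤ) ∈ A.1}) ∧
    (∀ I : Finset ℕ, I ⊆ Finset.Icc 1 n → I.card = n - k + 1 →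
        ∀ A : KSVertex n k, ∃ i ∈ I, (i : ℤ) ∈ A.1 ∨ -(i : ℤ) ∈ A.1) ∧
    balancedChromatic (fun A B : KSVertex n k => ksPos A.1 B.1)
        (fun A B : KSVertex n k => ksNeg A.1 B.1) ≤ n - k + 1 :=
  signedKneser_upper_bound_general n k hk
end

section
/- The mapping that sends each stable k-subset of [2n] (with [2n] identified with ±[n] via the cyclic order 1,−1,2,−2,…,n,−n) to the corresponding signed k-subset of [n] embeds the Schrijver graph S(2n,k) with all-negative signs as a subgraph of KS(n,k): any two disjoint stable k-subsets correspond to vertices joined by a negative edge. -/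
/-- The identification of `[2n]` (in the cyclic order `1,−1,2,−2,…,n,−n`) with `±[n]`:
position `2t+1` corresponds to `t+1` and position `2t+2` to `−(t+1)`. -/
def cyclicLabel (j : ℕ) : ℤ := if Odd j then ((j : ℤ) + 1) / 2 else -((j : ℤ) / 2)

/-- A stable `k`-subset of the cyclically ordered set `[m]`: no two cyclically consecutive
elements. -/
def IsStableSubset (m k : ℕ) (S : Finset ℕ) : Prop :=
  S ⊆ Finset.Icc 1 m ∧ S.card = k ∧ ∀ j ∈ S, (j % m) + 1 ∉ S

lemma cyclicLabel_injective : Function.Injective cyclicLabel := by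
  intro i j h
  unfold cyclicLabel at h
  split_ifs at h with hi hj hj <;> simp only [Nat.odd_iff] at hi hj <;> omega

lemma natAbs_cyclicLabel (j : ℕ) : (cyclicLabel j).natAbs = (j + 1) / 2 := by
  unfold cyclicLabel
  split_ifs with hj <;> simp only [Nat.odd_iff] at hj <;> omega

lemma cyclicLabel_ne_zero {j : ℕ} (hj : 1 ≤ j) : cyclicLabel j ≠ 0 := by
  rw [← Int.natAbs_ne_zero, natAbs_cyclicLabel]
  omega

lemma eq_succ_or_succ_eq_of_cyclicLabel_eq_neg {i j : ℕ} (hj : 1 ≤ j)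
    (h : cyclicLabel i = -cyclicLabel j) : i = j + 1 ∨ j = i + 1 := by
  unfold cyclicLabel at h
  split_ifs at h with hi hj' hj' <;> simp only [Nat.odd_iff] at hi hj' <;> omega

namespace IsStableSubset

variable {m k : ℕ} {S : Finset ℕ}

lemma pos_of_mem (hS : IsStableSubset m k S) {j : ℕ} (hj : j ∈ S) : 1 ≤ j :=
  (Finset.mem_Icc.mp (hS.1 hj)).1

lemma le_of_mem (hS : IsStableSubset m k S) {j : ℕ} (hj : j ∈ S) : j ≤ m :=
  (Finset.mem_Icc.mp (hS.1 hj)).2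

lemma succ_notMem (hS : IsStableSubset m k S) {j : ℕ} (hj : j ∈ S) (hjm : j < m) :
    j + 1 ∉ S := by
  simpa only [Nat.mod_eq_of_lt hjm] using hS.2.2 j hj

lemma isSignedKSubset_image_cyclicLabel {n : ℕ} (hS : IsStableSubset (2 * n) k S) :
    IsSignedKSubset n k (S.image cyclicLabel) := by
  refine ⟨?_, ?_, ?_⟩
  · rw [Finset.card_image_of_injective S cyclicLabel_injective, hS.2.1]
  · simp only [Finset.forall_mem_image]
    intro j hj
    refine ⟨cyclicLabel_ne_zero (hS.pos_of_mem hj), ?_⟩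
    have := hS.le_of_mem hj
    rw [natAbs_cyclicLabel]
    omega
  · simp only [Finset.forall_mem_image]
    intro j hj hneg
    obtain ⟨i, hi, hij⟩ := Finset.mem_image.mp hneg
    -- `j` and `-j` label the positions `2j-1, 2j`, consecutive but never wrapping around
    rcases eq_succ_or_succ_eq_of_cyclicLabel_eq_neg (hS.pos_of_mem hj) hij with rfl | rfl
    · exact hS.succ_notMem hj (by have := hS.le_of_mem hi; omega) hi
    · exact hS.succ_notMem hi (by have := hS.le_of_mem hj; omega) hj

end IsStableSubset

theorem schrijver_negative_subgraph_of_signedKneser_general (n k : ℕ) (hk : 1 ≤ k) :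
    (∀ S : Finset ℕ, IsStableSubset (2 * n) k S →
        IsSignedKSubset n k (S.image cyclicLabel)) ∧
    (∀ S T : Finset ℕ, IsStableSubset (2 * n) k S → IsStableSubset (2 * n) k T →
        S ≠ T → S.image cyclicLabel ≠ T.image cyclicLabel) ∧
    (∀ S T : Finset ℕ, IsStableSubset (2 * n) k S → IsStableSubset (2 * n) k T →
        Disjoint S T →
        ksNeg (S.image cyclicLabel) (T.image cyclicLabel) ∧
          S.image cyclicLabel ≠ T.image cyclicLabel) := by
  have image_injective := Finset.image_injective cyclicLabel_injective
  refine ⟨fun S hS => hS.isSignedKSubset_image_cyclicLabel,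
    fun S T _ _ hST => image_injective.ne hST, fun S T hS _ hST => ?_⟩
  have hneg : ksNeg (S.image cyclicLabel) (T.image cyclicLabel) :=
    (Finset.disjoint_image cyclicLabel_injective).mpr hST
  refine ⟨hneg, fun hSTeq => ?_⟩
  have hSne : S.Nonempty := Finset.card_pos.mp (hS.2.1 ▸ hk)
  rw [ksNeg, ← hSTeq, Finset.disjoint_self_iff_empty] at hneg
  exact (hSne.image cyclicLabel).ne_empty hneg

/-- via the cyclic order `1,−1,2,−2,…,n,−n`, every stable `k`-subset of `[2n]`
yields a signed `k`-subset of `[n]`; the correspondence is injective, and disjoint stable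
`k`-subsets are mapped to distinct vertices joined by a negative edge of `KS(n,k)`. Thus
`(S(2n,k),−)` is a subgraph of `KS(n,k)`. -/
theorem schrijver_negative_subgraph_of_signedKneser (n k : ℕ) (hk : 1 ≤ k) (hkn : k ≤ n) :
    (∀ S : Finset ℕ, IsStableSubset (2 * n) k S →
        IsSignedKSubset n k (S.image cyclicLabel)) ∧
    (∀ S T : Finset ℕ, IsStableSubset (2 * n) k S → IsStableSubset (2 * n) k T →
        S ≠ T → S.image cyclicLabel ≠ T.image cyclicLabel) ∧
    (∀ S T : Finset ℕ, IsStableSubset (2 * n) k S → IsStableSubset (2 * n) k T →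
        Disjoint S T →
        ksNeg (S.image cyclicLabel) (T.image cyclicLabel) ∧
          S.image cyclicLabel ≠ T.image cyclicLabel) :=
  schrijver_negative_subgraph_of_signedKneser_general n k hk
end

section
/- For all n ≥ k ≥ 1, χ_b(KS(n,k)) = n−k+1. -/
/-!
Colouring a vertex by its least absolute value `i` uses `n - k + 1` colours, and each colour class
is balanced: all its members contain exactly one of `±i`, and switching those containing `-i`
leaves only positive edges.

Conversely, switching the classes of a balanced colouring with `p` colours turns each class into
an intersecting family. Label a nonempty signed set `x ⊆ ±[n]` by `±|x|` if `|x| < k`, and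
otherwise by `±(k + c)`, where `c` is the largest colour of a vertex inside `x` or `-x` and the
sign records on which side a switched vertex of colour `c` lies. This labelling of the barycentric
subdivision of the boundary of the cross-polytope is antipodal, takes values in `±[k - 1 + p]` and
has no complementary edge, so the octahedral Tucker lemma gives `n ≤ k - 1 + p`.

Tucker's lemma follows from Ky Fan's count: the number of full chains whose labels alternate in
sign (ordered by absolute value) is odd. By negation it equals, in dimension `j`, the number of
chains of either alternation in the upper hemisphere; since the hemisphere is a pseudomanifold with
boundary the `(j - 1)`-sphere, double counting chains and their facets shows that this is congruent
mod 2 to the count in dimension `j - 1`.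
-/

open Finset Pointwise

open scoped Classical

namespace SignedKneser

def IsSignedSet (n : ℕ) (x : Finset ℤ) : Prop :=
  (∀ a ∈ x, a ≠ 0 ∧ a.natAbs ≤ n) ∧ ∀ a ∈ x, -a ∉ x

theorem isSignedKSubset_iff {n k : ℕ} {A : Finset ℤ} :
    IsSignedKSubset n k A ↔ #A = k ∧ IsSignedSet n A :=
  Iff.rfl

namespace IsSignedSet

variable {m n : ℕ} {x y : Finset ℤ}

theorem mono (hmn : m ≤ n) (hx : IsSignedSet m x) : IsSignedSet n x :=
  ⟨fun a ha => ⟨(hx.1 a ha).1, (hx.1 a ha).2.trans hmn⟩, hx.2⟩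

theorem subset (hxy : x ⊆ y) (hy : IsSignedSet n y) : IsSignedSet n x :=
  ⟨fun a ha => hy.1 a (hxy ha), fun a ha h => hy.2 a (hxy ha) (hxy h)⟩

theorem neg (hx : IsSignedSet n x) : IsSignedSet n (-x) := by
  refine ⟨fun a ha => ?_, fun a ha h => ?_⟩
  · simpa using hx.1 _ (mem_neg'.1 ha)
  · exact hx.2 _ (mem_neg'.1 ha) (by simpa using mem_neg'.1 h)

theorem disjoint_neg (hx : IsSignedSet n x) : Disjoint x (-x) :=
  disjoint_left.2 fun a ha h => hx.2 a ha (mem_neg'.1 h)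

theorem injOn_natAbs (hx : IsSignedSet n x) : Set.InjOn Int.natAbs x := by
  intro a ha b hb hab
  rcases Int.natAbs_eq_natAbs_iff.1 hab with h | rfl
  · exact h
  · exact (hx.2 b hb ha).elim

theorem image_natAbs_subset (hx : IsSignedSet n x) : x.image Int.natAbs ⊆ Icc 1 n := by
  intro c hc
  obtain ⟨a, ha, rfl⟩ := mem_image.1 hc
  have := hx.1 a ha
  rw [mem_Icc]
  omega

theorem card_image_natAbs (hx : IsSignedSet n x) : #(x.image Int.natAbs) = #x :=
  card_image_of_injOn hx.injOn_natAbs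

theorem card_le (hx : IsSignedSet n x) : #x ≤ n := by
  simpa [hx.card_image_natAbs] using card_le_card hx.image_natAbs_subset

theorem image_natAbs_eq (hx : IsSignedSet n x) (hcard : #x = n) :
    x.image Int.natAbs = Icc 1 n :=
  eq_of_subset_of_card_le hx.image_natAbs_subset (by simp [hx.card_image_natAbs, hcard])

theorem insert (hx : IsSignedSet n x) {w : ℤ} (hw : w ≠ 0) (hwn : w.natAbs ≤ n)
    (hwx : w.natAbs ∉ x.image Int.natAbs) : IsSignedSet n (insert w x) := by
  have hwx' : ∀ a ∈ x, a.natAbs ≠ w.natAbs := fun a ha h => hwx (h ▸ mem_image_of_mem _ ha)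
  refine ⟨fun a ha => ?_, fun a ha h => ?_⟩
  · rcases mem_insert.1 ha with rfl | ha
    · exact ⟨hw, hwn⟩
    · exact hx.1 a ha
  · rcases mem_insert.1 ha with rfl | ha <;> rcases mem_insert.1 h with h | h
    · omega
    · exact hwx' _ h (by simp)
    · exact hwx' _ ha (by omega)
    · exact hx.2 a ha h

end IsSignedSet

/-- The vertices of the barycentric subdivision of the boundary of the `n`-dimensional
cross-polytope: its faces are the nonempty signed subsets of `[n]`. -/
noncomputable def signedSets (n : ℕ) : Finset (Finset ℤ) :=
  {x ∈ (Icc (-n : ℤ) n).powerset | x.Nonempty ∧ IsSignedSet n x}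

theorem mem_signedSets {n : ℕ} {x : Finset ℤ} :
    x ∈ signedSets n ↔ x.Nonempty ∧ IsSignedSet n x := by
  rw [signedSets, mem_filter, mem_powerset, and_iff_right_iff_imp]
  rintro ⟨-, hx⟩ a ha
  have := hx.1 a ha
  rw [mem_Icc]
  omega

theorem mem_signedSets_of_isSignedKSubset {n k : ℕ} (hk : 1 ≤ k) {A : Finset ℤ}
    (hA : IsSignedKSubset n k A) : A ∈ signedSets n :=
  mem_signedSets.2 ⟨card_pos.1 (by rw [hA.1]; omega), (isSignedKSubset_iff.1 hA).2⟩

theorem neg_mem_signedSets {n : ℕ} {x : Finset ℤ} (hx : x ∈ signedSets n) :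
    -x ∈ signedSets n := by
  rw [mem_signedSets] at hx ⊢
  exact ⟨hx.1.neg, hx.2.neg⟩

theorem signedSets_mono {m n : ℕ} (h : m ≤ n) : signedSets m ⊆ signedSets n := fun x hx => by
  rw [mem_signedSets] at hx ⊢
  exact ⟨hx.1, hx.2.mono h⟩

/-- The upper hemisphere: a ball whose boundary is `signedSets (n - 1)`. -/
noncomputable def hemisphere (n : ℕ) : Finset (Finset ℤ) :=
  {x ∈ signedSets n | -(n : ℤ) ∉ x}

theorem mem_hemisphere {n : ℕ} {x : Finset ℤ} :
    x ∈ hemisphere n ↔ x ∈ signedSets n ∧ -(n : ℤ) ∉ x :=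
  mem_filter

theorem signedSets_subset_hemisphere (n : ℕ) : signedSets n ⊆ hemisphere (n + 1) := by
  intro x hx
  refine mem_hemisphere.2 ⟨signedSets_mono n.le_succ hx, fun h => ?_⟩
  have := ((mem_signedSets.1 hx).2.1 _ h).2
  omega

theorem mem_hemisphere_iff {n : ℕ} {x : Finset ℤ} :
    x ∈ hemisphere n ↔ x.Nonempty ∧ IsSignedSet n x ∧ -(n : ℤ) ∉ x := by
  rw [mem_hemisphere, mem_signedSets, and_assoc]

section Chains

variable {α : Type*}

noncomputable def chains (t : ℕ) (R : Finset (Finset α)) : Finset (Finset (Finset α)) :=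
  {C ∈ R.powersetCard t | IsChain (· ⊆ ·) (C : Set (Finset α))}

theorem mem_chains {t : ℕ} {R : Finset (Finset α)} {C : Finset (Finset α)} :
    C ∈ chains t R ↔ C ⊆ R ∧ #C = t ∧ IsChain (· ⊆ ·) (C : Set (Finset α)) := by
  rw [chains, mem_filter, mem_powersetCard, and_assoc]

theorem _root_.IsChain.subset_of_card_le {C : Set (Finset α)} (hC : IsChain (· ⊆ ·) C)
    {u v : Finset α} (hu : u ∈ C) (hv : v ∈ C) (huv : #u ≤ #v) : u ⊆ v := by
  by_cases hne : u = v
  · exact hne ▸ subset_rfl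
  rcases hC hu hv hne with h | h
  · exact h
  · exact (eq_of_subset_of_card_le h huv).symm ▸ subset_rfl

theorem _root_.IsChain.injOn_card {C : Set (Finset α)} (hC : IsChain (· ⊆ ·) C) :
    Set.InjOn Finset.card C := fun _ hu _ hv h =>
  eq_of_subset_of_card_le (hC.subset_of_card_le hu hv h.le) h.ge

theorem image_card_subset_Icc {n : ℕ} {C : Finset (Finset ℤ)} (hC : C ⊆ signedSets n) :
    C.image card ⊆ Icc 1 n := by
  intro c hc
  obtain ⟨u, hu, rfl⟩ := mem_image.1 hc
  obtain ⟨hne, hsigned⟩ := mem_signedSets.1 (hC hu)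
  exact mem_Icc.2 ⟨hne.card_pos, hsigned.card_le⟩

end Chains

section Alternating

variable {α β : Type*}

/-- `C` is alternating for `f` if `|f|` is injective on `C` and the signs of `f` alternate,
starting with `+`, when `C` is listed by increasing `|f|`. -/
def IsAlternatingOn (f : α → ℤ) (C : Finset α) : Prop :=
  Set.InjOn (fun x => (f x).natAbs) C ∧
    ∀ x ∈ C, 0 < (-1) ^ #{y ∈ C | (f y).natAbs < (f x).natAbs} * f x

theorem isAlternatingOn_empty (f : α → ℤ) : IsAlternatingOn f ∅ := by
  simp [IsAlternatingOn]

theorem IsAlternatingOn.not_neg {f : α → ℤ} {C : Finset α} (h : IsAlternatingOn f C)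
    (hC : C.Nonempty) : ¬IsAlternatingOn (-f) C := by
  rintro ⟨-, hneg⟩
  obtain ⟨x, hx⟩ := hC
  have h₁ := h.2 x hx
  have h₂ := hneg x hx
  simp only [Pi.neg_apply, Int.natAbs_neg, mul_neg] at h₂
  omega

theorem IsAlternatingOn.eq_of_apply_eq {g : α → ℤ} {D : Finset α} (h : IsAlternatingOn g D)
    {u v : α} (hu : u ∈ D) (hv : v ∈ D) (huv : g u = g v) : u = v :=
  h.1 hu hv (by simp [huv])

theorem isAlternatingOn_image_iff [DecidableEq β] {e : α → β} {f : β → ℤ} {g : α → ℤ}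
    {C : Finset α} (he : Set.InjOn e C) (hfg : ∀ x ∈ C, f (e x) = g x) :
    IsAlternatingOn f (C.image e) ↔ IsAlternatingOn g C := by
  have hinj : Set.InjOn (fun x => (f x).natAbs) (e '' C) ↔
      Set.InjOn (fun x => (g x).natAbs) C := by
    rw [← he.comp_iff]
    exact Set.EqOn.injOn_iff fun x hx => by simp [hfg x hx]
  have hcount : ∀ x ∈ C, #{y ∈ C.image e | (f y).natAbs < (f (e x)).natAbs} =
      #{y ∈ C | (g y).natAbs < (g x).natAbs} := fun x hx => by
    rw [filter_image, card_image_of_injOn (he.mono (filter_subset _ _)), hfg x hx]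
    exact congrArg card (filter_congr fun y hy => by rw [hfg y hy])
  simp only [IsAlternatingOn, coe_image, hinj, forall_mem_image]
  exact and_congr_right fun _ => forall₂_congr fun x hx => by rw [hcount x hx, hfg x hx]

variable [DecidableEq α] {f : α → ℤ} {C : Finset α}

theorem isAlternatingOn_iff_of_min {a : α} (ha : a ∈ C)
    (hmin : ∀ y ∈ C, y ≠ a → (f a).natAbs < (f y).natAbs) :
    IsAlternatingOn f C ↔ 0 < f a ∧ IsAlternatingOn (-f) (C.erase a) := by
  have hC : C = insert a (C.erase a) := (insert_erase ha).symm
  have hinj : Set.InjOn (fun x => (f x).natAbs) C ↔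
      Set.InjOn (fun x => ((-f) x).natAbs) (C.erase a) := by
    conv_lhs => rw [hC, coe_insert, Set.injOn_insert (by simp)]
    simp only [Pi.neg_apply, Int.natAbs_neg, and_iff_left_iff_imp]
    rintro - ⟨y, hy, hya⟩
    exact (hmin y (mem_of_mem_erase hy) (ne_of_mem_erase hy)).ne hya.symm
  have hcount_a : #{y ∈ C | (f y).natAbs < (f a).natAbs} = 0 := by
    refine card_eq_zero.2 (filter_eq_empty_iff.2 fun y hy hlt => ?_)
    by_cases hya : y = a
    · exact (hya ▸ hlt).false
    · exact (hmin y hy hya).not_gt hlt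
  have hcount : ∀ x ∈ C.erase a, #{y ∈ C | (f y).natAbs < (f x).natAbs} =
      #{y ∈ C.erase a | ((-f) y).natAbs < ((-f) x).natAbs} + 1 := fun x hx => by
    have hax := hmin x (mem_of_mem_erase hx) (ne_of_mem_erase hx)
    conv_lhs => rw [hC, filter_insert, if_pos hax]
    rw [card_insert_of_notMem (by simp)]
    simp
  rw [IsAlternatingOn, IsAlternatingOn, hinj, hC, forall_mem_insert, ← hC, hcount_a]
  refine ⟨fun ⟨hi, ha, hx⟩ => ⟨by simpa using ha, hi, fun x hx' => ?_⟩,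
    fun ⟨ha, hi, hx⟩ => ⟨hi, by simpa using ha, fun x hx' => ?_⟩⟩
  · have := hx x hx'
    rw [hcount x hx', pow_succ] at this
    simpa using this
  · have := hx x hx'
    rw [hcount x hx', pow_succ]
    simpa using this

theorem card_filter_isAlternatingOn_erase_eq {a : α} (ha : a ∈ C)
    (hmin : ∀ y ∈ C, y ≠ a → (f a).natAbs < (f y).natAbs) :
    #{v ∈ C | IsAlternatingOn f (C.erase v)} =
      (if IsAlternatingOn f (C.erase a) then 1 else 0) +
        if 0 < f a then #{v ∈ C.erase a | IsAlternatingOn (-f) ((C.erase a).erase v)} else 0 := by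
  set M := C.erase a
  have hface : ∀ v ∈ M, IsAlternatingOn f (C.erase v) ↔
      0 < f a ∧ IsAlternatingOn (-f) (M.erase v) := fun v hv => by
    rw [isAlternatingOn_iff_of_min (mem_erase.2 ⟨(ne_of_mem_erase hv).symm, ha⟩)
      fun y hy hya => hmin y (mem_of_mem_erase hy) hya, erase_right_comm]
  have hsplit : {v ∈ C | IsAlternatingOn f (C.erase v)} =
      if IsAlternatingOn f M then insert a {v ∈ M | IsAlternatingOn f (C.erase v)}
      else {v ∈ M | IsAlternatingOn f (C.erase v)} := by
    have h := filter_insert (p := fun v => IsAlternatingOn f (C.erase v)) a M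
    rwa [show insert a M = C from insert_erase ha] at h
  have hrest : #{v ∈ M | IsAlternatingOn f (C.erase v)} =
      if 0 < f a then #{v ∈ M | IsAlternatingOn (-f) (M.erase v)} else 0 := by
    split_ifs with h
    · exact congrArg card (filter_congr fun v hv => by rw [hface v hv]; simp [h])
    · exact card_eq_zero.2 (filter_eq_empty_iff.2 fun v hv hv' => h ((hface v hv).1 hv').1)
  rw [hsplit, ← hrest]
  split_ifs
  · rw [card_insert_of_notMem (by simp [M]), add_comm]
  · rw [zero_add]

theorem card_filter_isAlternatingOn_erase_mod_two_of_injOn (hC : C.Nonempty)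
    (hf : ∀ x ∈ C, f x ≠ 0) (hinj : Set.InjOn (fun x => (f x).natAbs) C) :
    #{v ∈ C | IsAlternatingOn f (C.erase v)} % 2 =
      if IsAlternatingOn f C ∨ IsAlternatingOn (-f) C then 1 else 0 := by
  induction C using Finset.strongInduction generalizing f with
  | H C ih =>
  obtain ⟨a, ha, hmin'⟩ := exists_min_image C (fun x => (f x).natAbs) hC
  have hmin : ∀ y ∈ C, y ≠ a → (f a).natAbs < (f y).natAbs := fun y hy hya =>
    (hmin' y hy).lt_of_ne fun h => hya (hinj hy ha h.symm)
  have hfa := hf a ha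
  rw [card_filter_isAlternatingOn_erase_eq ha hmin, isAlternatingOn_iff_of_min ha hmin,
    isAlternatingOn_iff_of_min ha (by simpa using hmin), neg_neg, Pi.neg_apply, neg_pos,
    show f a < 0 ↔ ¬0 < f a by omega]
  set M := C.erase a
  rcases M.eq_empty_or_nonempty with hM | hM
  · simp [hM, isAlternatingOn_empty]
  have ih' := ih M (erase_ssubset ha) hM (f := -f)
    (fun x hx => by simpa using hf x (mem_of_mem_erase hx))
    (by simpa only [Pi.neg_apply, Int.natAbs_neg] using hinj.mono (coe_subset.2 (erase_subset a C)))
  rw [neg_neg] at ih'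
  have hnot : ¬(IsAlternatingOn f M ∧ IsAlternatingOn (-f) M) := fun h => h.1.not_neg hM h.2
  by_cases h₁ : IsAlternatingOn f M <;> by_cases h₂ : IsAlternatingOn (-f) M <;>
    by_cases h₃ : 0 < f a <;> simp [h₁, h₂, h₃] at ih' hnot ⊢ <;> omega

theorem image_swap_erase {u v : α} (hu : u ∈ C) (hv : v ∈ C) :
    (C.erase u).image (Equiv.swap u v) = C.erase v := by
  ext w
  simp only [mem_image, mem_erase]
  constructor
  · rintro ⟨x, ⟨hxu, hx⟩, rfl⟩
    rw [Equiv.swap_apply_def]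
    split_ifs <;> grind
  · intro h
    refine ⟨Equiv.swap u v w, ?_, Equiv.swap_apply_self _ _ _⟩
    rw [Equiv.swap_apply_def]
    split_ifs <;> grind

theorem card_filter_isAlternatingOn_erase_of_apply_eq {u v : α} (hu : u ∈ C) (hv : v ∈ C)
    (huv : f u = f v) (hne : u ≠ v) :
    #{w ∈ C | IsAlternatingOn f (C.erase w)} =
      if IsAlternatingOn f (C.erase u) then 2 else 0 := by
  have hswap : IsAlternatingOn f (C.erase u) ↔ IsAlternatingOn f (C.erase v) := by
    have hfix : ∀ x, f (Equiv.swap u v x) = f x := fun x => by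
      rw [Equiv.swap_apply_def]
      split_ifs <;> simp_all
    rw [← image_swap_erase hu hv,
      isAlternatingOn_image_iff (Equiv.swap u v).injective.injOn fun x _ => hfix x]
  have hfaces : {w ∈ C | IsAlternatingOn f (C.erase w)} =
      if IsAlternatingOn f (C.erase u) then {u, v} else ∅ := by
    ext w
    simp only [mem_filter]
    constructor
    · rintro ⟨hw, hw'⟩
      by_cases hwu : w = u
      · subst hwu; simp [hw']
      by_cases hwv : w = v
      · subst hwv; simp [hswap.2 hw']
      exact (hne (hw'.eq_of_apply_eq (mem_erase.2 ⟨Ne.symm hwu, hu⟩)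
        (mem_erase.2 ⟨Ne.symm hwv, hv⟩) huv)).elim
    · split_ifs with h
      · simp only [mem_insert, mem_singleton]
        rintro (rfl | rfl)
        · exact ⟨hu, h⟩
        · exact ⟨hv, hswap.1 h⟩
      · simp
  rw [hfaces]
  split_ifs <;> simp [card_pair hne]

theorem card_filter_isAlternatingOn_erase_mod_two (hC : C.Nonempty)
    (hf : ∀ x ∈ C, ∀ y ∈ C, f x ≠ -f y) :
    #{v ∈ C | IsAlternatingOn f (C.erase v)} % 2 =
      if IsAlternatingOn f C ∨ IsAlternatingOn (-f) C then 1 else 0 := by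
  by_cases hinj : Set.InjOn (fun x => (f x).natAbs) C
  · exact card_filter_isAlternatingOn_erase_mod_two_of_injOn hC
      (fun x hx h => hf x hx x hx (by omega)) hinj
  obtain ⟨u, hu, v, hv, huv, hne⟩ : ∃ u ∈ C, ∃ v ∈ C, f u = f v ∧ u ≠ v := by
    simp only [Set.InjOn, not_forall] at hinj
    obtain ⟨u, hu, v, hv, h, hne⟩ := hinj
    exact ⟨u, hu, v, hv, (Int.natAbs_eq_natAbs_iff.1 h).resolve_right (hf u hu v hv), hne⟩
  have hnot : ¬(IsAlternatingOn f C ∨ IsAlternatingOn (-f) C) := fun h => hne <|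
    h.elim (fun h => h.eq_of_apply_eq hu hv huv) fun h => h.eq_of_apply_eq hu hv (by simp [huv])
  rw [card_filter_isAlternatingOn_erase_of_apply_eq hu hv huv hne, if_neg hnot]
  split_ifs <;> rfl

end Alternating

section Extensions

variable {α : Type*} [DecidableEq α] {t : ℕ} {R : Finset (Finset α)}

theorem exists_eq_erase_of_subset {s u : Finset α} (hsu : s ⊆ u) (hcard : #s + 1 = #u) :
    ∃ g ∈ u, s = u.erase g := by
  obtain ⟨g, hg, rfl⟩ := exists_eq_insert_iff.2 ⟨hsu, hcard⟩
  exact ⟨g, mem_insert_self g s, (erase_insert hg).symm⟩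

theorem card_eq_card_of_forall_mem_iff_insert {E : Finset (Finset α)} {lo W : Finset α}
    (hW : Disjoint W lo) (hE : ∀ x, x ∈ E ↔ ∃ w ∈ W, insert w lo = x) : #E = #W := by
  have : E = W.image (insert · lo) := by ext x; simp [hE]
  rw [this, card_image_of_injOn fun w hw w' _ h => (insert_inj (disjoint_left.1 hW hw)).1 h]

/-- The facets of a chain `C` are the chains `C.erase v`. -/
theorem card_filter_chains_subset {C : Finset (Finset α)} (hC : C ∈ chains (t + 1) R)
    (P : Finset (Finset α) → Prop) :
    #{F ∈ chains t R | P F ∧ F ⊆ C} = #{v ∈ C | P (C.erase v)} := by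
  obtain ⟨hCR, hCcard, hCch⟩ := mem_chains.1 hC
  refine (card_bij (fun v _ => C.erase v) (fun v hv => ?_) (fun v hv w _ h => ?_)
    (fun F hF => ?_)).symm
  · obtain ⟨hvC, hP⟩ := mem_filter.1 hv
    refine mem_filter.2
      ⟨mem_chains.2 ⟨(erase_subset v C).trans hCR, ?_, ?_⟩, hP, erase_subset v C⟩
    · rw [card_erase_of_mem hvC, hCcard, Nat.add_sub_cancel]
    · exact hCch.mono (by simp)
  · exact (erase_inj C (mem_filter.1 hv).1).1 h
  · obtain ⟨hFt, hP, hFC⟩ := mem_filter.1 hF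
    obtain ⟨v, hvF, rfl⟩ :=
      exists_eq_insert_iff.2 ⟨hFC, by rw [(mem_chains.1 hFt).2.1, hCcard]⟩
    exact ⟨v, mem_filter.2 ⟨mem_insert_self _ _, by rwa [erase_insert hvF]⟩,
      erase_insert hvF⟩

noncomputable def chainExtensions (R F : Finset (Finset α)) : Finset (Finset α) :=
  {x ∈ R | x ∉ F ∧ ∀ u ∈ F, u ⊆ x ∨ x ⊆ u}

theorem card_filter_chains_superset {F : Finset (Finset α)} (hF : F ∈ chains t R) :
    #{C ∈ chains (t + 1) R | F ⊆ C} = #(chainExtensions R F) := by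
  obtain ⟨hFR, hFcard, hFch⟩ := mem_chains.1 hF
  refine (card_bij (fun x _ => insert x F) (fun x hx => ?_) (fun x hx y _ h => ?_)
    (fun C hC => ?_)).symm
  · obtain ⟨hxR, hxF, hcomp⟩ := mem_filter.1 hx
    refine mem_filter.2 ⟨mem_chains.2 ⟨insert_subset hxR hFR, ?_, ?_⟩, subset_insert x F⟩
    · rw [card_insert_of_notMem hxF, hFcard]
    · rw [coe_insert]
      exact hFch.insert fun u hu _ => (hcomp u hu).symm
  · exact (insert_inj (mem_filter.1 hx).2.1).1 h
  · obtain ⟨hCt, hFC⟩ := mem_filter.1 hC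
    obtain ⟨hCR, hCcard, hCch⟩ := mem_chains.1 hCt
    obtain ⟨x, hxF, rfl⟩ := exists_eq_insert_iff.2 ⟨hFC, by rw [hFcard, hCcard]⟩
    refine ⟨x, mem_filter.2 ⟨hCR (mem_insert_self x F), hxF, fun u hu => ?_⟩, rfl⟩
    have hne : u ≠ x := fun h => hxF (h ▸ hu)
    exact hCch (by simp [hu]) (by simp) hne

end Extensions

section Pseudomanifold

variable {j : ℕ} {F : Finset (Finset ℤ)}

theorem exists_image_card_eq_erase (hF : F ∈ chains j (hemisphere (j + 1))) :
    ∃ g ∈ Icc 1 (j + 1), F.image card = (Icc 1 (j + 1)).erase g := by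
  obtain ⟨hFH, hFcard, hFch⟩ := mem_chains.1 hF
  refine exists_eq_erase_of_subset
    (image_card_subset_Icc (hFH.trans (filter_subset _ _))) ?_
  rw [card_image_of_injOn hFch.injOn_card, hFcard, Nat.card_Icc, Nat.add_sub_cancel]

theorem card_ne_of_image_card_eq_erase {g : ℕ} {s : Finset ℕ}
    (hgap : F.image card = s.erase g) {u : Finset ℤ} (hu : u ∈ F) : #u ≠ g := fun h => by
  have := mem_image_of_mem card hu
  rw [hgap, h] at this
  simp at this

theorem exists_bottom_of_image_card_eq_erase (hF : F ∈ chains j (hemisphere (j + 1))) {g : ℕ}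
    (hgap : F.image card = (Icc 1 (j + 1)).erase g) (hg : g ∈ Icc 1 (j + 1)) :
    ∃ lo, #lo = g - 1 ∧ (lo = ∅ ∨ lo ∈ F) ∧ ∀ u ∈ F, #u < g → u ⊆ lo := by
  obtain ⟨hFH, -, hFch⟩ := mem_chains.1 hF
  rw [mem_Icc] at hg
  rcases hg.1.eq_or_lt with rfl | hg1
  · refine ⟨∅, rfl, Or.inl rfl, fun u hu hlt => ?_⟩
    have := (mem_hemisphere_iff.1 (hFH hu)).1.card_pos
    omega
  have : g - 1 ∈ F.image card := by rw [hgap, mem_erase, mem_Icc]; omega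
  obtain ⟨lo, hlo, hlo_card⟩ := mem_image.1 this
  exact ⟨lo, hlo_card, Or.inr hlo, fun u hu hlt => hFch.subset_of_card_le hu hlo (by omega)⟩

theorem mem_chainExtensions_iff (hF : F ∈ chains j (hemisphere (j + 1))) {g : ℕ}
    (hgap : F.image card = (Icc 1 (j + 1)).erase g) {lo : Finset ℤ} (hlo_card : #lo = g - 1)
    (hlo : lo = ∅ ∨ lo ∈ F) (hlo_sub : ∀ u ∈ F, #u < g → u ⊆ lo) {x : Finset ℤ} :
    x ∈ chainExtensions (hemisphere (j + 1)) F ↔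
      x ∈ hemisphere (j + 1) ∧ #x = g ∧ lo ⊆ x ∧ ∀ u ∈ F, g < #u → x ⊆ u := by
  obtain ⟨hFH, -, hFch⟩ := mem_chains.1 hF
  have hcardF : ∀ u ∈ F, #u ≠ g := fun u hu => card_ne_of_image_card_eq_erase hgap hu
  rw [chainExtensions, mem_filter]
  constructor
  · rintro ⟨hxH, hxF, hcomp⟩
    have hx_card : #x = g := by
      by_contra hne
      have : #x ∈ F.image card := by
        rw [hgap, mem_erase]
        exact ⟨hne, image_card_subset_Icc (filter_subset _ _) (mem_image_of_mem card hxH)⟩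
      obtain ⟨u, hu, hux⟩ := mem_image.1 this
      rcases hcomp u hu with h | h
      · exact hxF (eq_of_subset_of_card_le h hux.ge ▸ hu)
      · exact hxF (eq_of_subset_of_card_le h hux.le ▸ hu)
    refine ⟨hxH, hx_card, ?_, fun u hu hlt => ?_⟩
    · rcases hlo with rfl | hlo
      · exact empty_subset x
      · refine (hcomp lo hlo).resolve_right fun h => ?_
        have := card_le_card h
        have := (mem_hemisphere_iff.1 (hFH hlo)).1.card_pos
        omega
    · exact (hcomp u hu).resolve_left fun h => by have := card_le_card h; omega
  · rintro ⟨hxH, hx_card, hlo_x, hx_sub⟩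
    refine ⟨hxH, fun hxF => hcardF x hxF hx_card, fun u hu => ?_⟩
    rcases (hcardF u hu).lt_or_gt with h | h
    · exact Or.inl ((hlo_sub u hu h).trans hlo_x)
    · exact Or.inr (hx_sub u hu h)

theorem card_filter_hemisphere_between {lo hi : Finset ℤ} (hhi : hi ∈ hemisphere (j + 1))
    (hlo_hi : lo ⊆ hi) (hcard : #hi = #lo + 2) :
    #{x ∈ hemisphere (j + 1) | #x = #lo + 1 ∧ lo ⊆ x ∧ x ⊆ hi} = 2 := by
  have hW : #(hi \ lo) = 2 := by rw [card_sdiff_of_subset hlo_hi]; omega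
  rw [← hW, card_eq_card_of_forall_mem_iff_insert disjoint_sdiff_self_left fun x => ?_]
  rw [mem_filter]
  constructor
  · rintro ⟨-, hx_card, hlo_x, hx_hi⟩
    obtain ⟨w, hw, rfl⟩ := exists_eq_insert_iff.2 ⟨hlo_x, hx_card.symm⟩
    exact ⟨w, mem_sdiff.2 ⟨hx_hi (mem_insert_self w lo), hw⟩, rfl⟩
  · rintro ⟨w, hw, rfl⟩
    obtain ⟨hw_hi, hw_lo⟩ := mem_sdiff.1 hw
    have hsub : insert w lo ⊆ hi := insert_subset hw_hi hlo_hi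
    obtain ⟨-, hsigned, hneg⟩ := mem_hemisphere_iff.1 hhi
    exact ⟨mem_hemisphere_iff.2 ⟨insert_nonempty w lo, hsigned.subset hsub,
      fun h => hneg (hsub h)⟩, card_insert_of_notMem hw_lo, subset_insert w lo, hsub⟩

theorem insert_mem_hemisphere_iff {lo : Finset ℤ} (hlo : IsSignedSet (j + 1) lo)
    (hlo_neg : -((j + 1 : ℕ) : ℤ) ∉ lo) {v : ℕ} (hv : v ∈ Icc 1 (j + 1))
    (hv_eq : lo.image Int.natAbs = (Icc 1 (j + 1)).erase v) {w : ℤ} (hw : w ∉ lo) :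
    insert w lo ∈ hemisphere (j + 1) ↔ w.natAbs = v ∧ w ≠ -((j + 1 : ℕ) : ℤ) := by
  rw [mem_hemisphere_iff]
  constructor
  · rintro ⟨-, hsigned, hneg⟩
    refine ⟨?_, fun h => hneg (h ▸ mem_insert_self w lo)⟩
    have hw_lo : w.natAbs ∉ lo.image Int.natAbs := fun h => by
      obtain ⟨a, ha, haw⟩ := mem_image.1 h
      exact hw (hsigned.injOn_natAbs (mem_insert_of_mem ha) (mem_insert_self w lo) haw ▸ ha)
    have := hsigned.1 w (mem_insert_self w lo)
    rw [hv_eq, mem_erase, mem_Icc] at hw_lo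
    omega
  · rintro ⟨rfl, hw_ne⟩
    have := mem_Icc.1 hv
    refine ⟨insert_nonempty w lo, hlo.insert (by omega) this.2 (by simp [hv_eq]), ?_⟩
    rw [mem_insert]
    exact fun h => h.elim (fun h => hw_ne h.symm) hlo_neg

/-- Over a signed set `lo` of size `j` in the hemisphere, with missing absolute value `v`, the
full signed sets are `lo ∪ {±v}`, except `lo ∪ {-(j + 1)}`, which is not in the hemisphere. -/
theorem card_filter_hemisphere_superset_eq_card {lo : Finset ℤ} (hlo : IsSignedSet (j + 1) lo)
    (hlo_neg : -((j + 1 : ℕ) : ℤ) ∉ lo) (hlo_card : #lo = j) {v : ℕ}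
    (hv : v ∈ Icc 1 (j + 1)) (hv_eq : lo.image Int.natAbs = (Icc 1 (j + 1)).erase v) :
    #{x ∈ hemisphere (j + 1) | #x = j + 1 ∧ lo ⊆ x} =
      #(({(v : ℤ), -(v : ℤ)} : Finset ℤ).erase (-((j + 1 : ℕ) : ℤ))) := by
  have hW (w : ℤ) :
      w ∈ ({(v : ℤ), -(v : ℤ)} : Finset ℤ).erase (-((j + 1 : ℕ) : ℤ)) ↔
        w.natAbs = v ∧ w ≠ -((j + 1 : ℕ) : ℤ) := by
    rw [mem_erase, mem_insert, mem_singleton, Int.natAbs_eq_iff, and_comm]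
  have hv_lo (w : ℤ) (hw : w.natAbs = v) : w ∉ lo := fun h => by
    simpa [hv_eq, hw] using mem_image_of_mem Int.natAbs h
  refine card_eq_card_of_forall_mem_iff_insert
    (disjoint_left.2 fun w hw => hv_lo w ((hW w).1 hw).1) fun x => ?_
  rw [mem_filter]
  constructor
  · rintro ⟨hxH, hx_card, hlo_x⟩
    obtain ⟨w, hw_lo, rfl⟩ := exists_eq_insert_iff.2 ⟨hlo_x, by omega⟩
    exact ⟨w, (hW w).2 ((insert_mem_hemisphere_iff hlo hlo_neg hv hv_eq hw_lo).1 hxH), rfl⟩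
  · rintro ⟨w, hw, rfl⟩
    have hw_lo := hv_lo w ((hW w).1 hw).1
    refine ⟨(insert_mem_hemisphere_iff hlo hlo_neg hv hv_eq hw_lo).2 ((hW w).1 hw), ?_,
      subset_insert w lo⟩
    rw [card_insert_of_notMem hw_lo, hlo_card]

theorem card_filter_hemisphere_superset {lo : Finset ℤ} (hlo : IsSignedSet (j + 1) lo)
    (hlo_neg : -((j + 1 : ℕ) : ℤ) ∉ lo) (hlo_card : #lo = j) :
    #{x ∈ hemisphere (j + 1) | #x = j + 1 ∧ lo ⊆ x} = if IsSignedSet j lo then 1 else 2 := by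
  obtain ⟨v, hv, hv_eq⟩ := exists_eq_erase_of_subset hlo.image_natAbs_subset
    (by rw [hlo.card_image_natAbs, hlo_card, Nat.card_Icc, Nat.add_sub_cancel])
  rw [card_filter_hemisphere_superset_eq_card hlo hlo_neg hlo_card hv hv_eq]
  have hv1 := (mem_Icc.1 hv).1
  have hsigned : IsSignedSet j lo ↔ v = j + 1 := by
    constructor
    · intro h
      by_contra hne
      have : j + 1 ∈ lo.image Int.natAbs := by rw [hv_eq]; simp [Ne.symm hne]
      obtain ⟨a, ha, ha_abs⟩ := mem_image.1 this
      have := (h.1 a ha).2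
      omega
    · rintro rfl
      refine ⟨fun a ha => ⟨(hlo.1 a ha).1, ?_⟩, hlo.2⟩
      have := hv_eq ▸ mem_image_of_mem Int.natAbs ha
      rw [mem_erase, mem_Icc] at this
      omega
  by_cases h : v = j + 1
  · subst h
    rw [if_pos (hsigned.2 rfl), erase_insert_of_ne (by omega), erase_singleton]
    simp
  · have : -((j + 1 : ℕ) : ℤ) ∉ ({(v : ℤ), -(v : ℤ)} : Finset ℤ) := by
      simp only [mem_insert, mem_singleton, not_or]
      omega
    rw [if_neg (mt hsigned.1 h), erase_eq_of_notMem this, card_pair (by omega)]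

theorem card_chainExtensions_of_gap_lt (hF : F ∈ chains j (hemisphere (j + 1))) {g : ℕ}
    (hgap : F.image card = (Icc 1 (j + 1)).erase g) (hg : 1 ≤ g) (hgj : g ≤ j) :
    #(chainExtensions (hemisphere (j + 1)) F) = 2 := by
  obtain ⟨hFH, -, hFch⟩ := mem_chains.1 hF
  obtain ⟨lo, hlo_card, hlo, hlo_sub⟩ :=
    exists_bottom_of_image_card_eq_erase hF hgap (mem_Icc.2 ⟨hg, by omega⟩)
  obtain ⟨hi, hhi, hhi_card⟩ : ∃ hi ∈ F, #hi = g + 1 :=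
    mem_image.1 (hgap ▸ mem_erase.2 ⟨by omega, by rw [mem_Icc]; omega⟩)
  have hlo_hi : lo ⊆ hi := by
    rcases hlo with rfl | hlo
    · exact empty_subset hi
    · exact hFch.subset_of_card_le hlo hhi (by omega)
  convert card_filter_hemisphere_between (hFH hhi) hlo_hi (by omega) using 2
  ext x
  rw [mem_chainExtensions_iff hF hgap hlo_card hlo hlo_sub, mem_filter,
    show #lo + 1 = g by omega]
  refine and_congr_right fun _ => and_congr_right fun _ => and_congr_right fun _ =>
    ⟨fun h => h hi hhi (by omega), fun h u hu hlt => h.trans ?_⟩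
  exact hFch.subset_of_card_le hhi hu (by omega)

theorem card_chainExtensions_of_gap_top (hF : F ∈ chains j (hemisphere (j + 1)))
    (hgap : F.image card = (Icc 1 (j + 1)).erase (j + 1)) :
    #(chainExtensions (hemisphere (j + 1)) F) = if F ⊆ signedSets j then 1 else 2 := by
  obtain ⟨hFH, -, -⟩ := mem_chains.1 hF
  obtain ⟨lo, hlo_card, hlo, hlo_sub⟩ := exists_bottom_of_image_card_eq_erase hF hgap (by simp)
  obtain ⟨hlo_signed, hlo_neg⟩ : IsSignedSet (j + 1) lo ∧ -((j + 1 : ℕ) : ℤ) ∉ lo := by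
    rcases hlo with rfl | hlo
    · simp [IsSignedSet]
    · exact (mem_hemisphere_iff.1 (hFH hlo)).2
  have hcard : ∀ u ∈ F, #u < j + 1 := fun u hu => by
    have := (mem_hemisphere_iff.1 (hFH hu)).2.1.card_le
    have := card_ne_of_image_card_eq_erase hgap hu
    omega
  have hboundary : F ⊆ signedSets j ↔ IsSignedSet j lo := by
    refine ⟨fun h => ?_, fun h u hu => ?_⟩
    · rcases hlo with rfl | hlo
      · simp [IsSignedSet]
      · exact (mem_signedSets.1 (h hlo)).2
    · exact mem_signedSets.2 ⟨(mem_hemisphere_iff.1 (hFH hu)).1,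
        h.subset (hlo_sub u hu (hcard u hu))⟩
  convert card_filter_hemisphere_superset hlo_signed hlo_neg (by omega) using 2
  ext x
  rw [mem_chainExtensions_iff hF hgap hlo_card hlo hlo_sub, mem_filter]
  exact and_congr_right fun _ => and_congr_right fun _ =>
    and_iff_left fun u hu hlt => absurd (hcard u hu) (by omega)

/-- The hemisphere is a pseudomanifold with boundary `signedSets j`. -/
theorem card_chainExtensions_hemisphere (hF : F ∈ chains j (hemisphere (j + 1))) :
    #(chainExtensions (hemisphere (j + 1)) F) = if F ⊆ signedSets j then 1 else 2 := by
  obtain ⟨g, hg, hgap⟩ := exists_image_card_eq_erase hF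
  rw [mem_Icc] at hg
  rcases hg.2.lt_or_eq with hgj | rfl
  · obtain ⟨top, htop, htop_card⟩ : ∃ top ∈ F, #top = j + 1 :=
      mem_image.1 (hgap ▸ mem_erase.2 ⟨hgj.ne', by simp⟩)
    rw [card_chainExtensions_of_gap_lt hF hgap hg.1 (by omega),
      if_neg fun h => by have := (mem_signedSets.1 (h htop)).2.card_le; omega]
  · exact card_chainExtensions_of_gap_top hF hgap

end Pseudomanifold

section Tucker

variable {n j : ℕ} {lab : Finset ℤ → ℤ}

def IsAntipodal (n : ℕ) (lab : Finset ℤ → ℤ) : Prop :=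
  ∀ x ∈ signedSets n, lab (-x) = -lab x

def HasNoComplementaryEdge (n : ℕ) (lab : Finset ℤ → ℤ) : Prop :=
  ∀ x ∈ signedSets n, ∀ y ∈ signedSets n, x ⊆ y → lab x ≠ -lab y

noncomputable def altChainCount (lab : Finset ℤ → ℤ) (j : ℕ) : ℕ :=
  #{C ∈ chains j (signedSets j) | IsAlternatingOn lab C}

noncomputable def hemisphereAltChainCount (lab : Finset ℤ → ℤ) (j : ℕ) : ℕ :=
  #{C ∈ chains j (hemisphere j) | IsAlternatingOn lab C ∨ IsAlternatingOn (-lab) C}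

theorem sum_mod_two_eq_card_filter {ι : Type*} {s : Finset ι} {f : ι → ℕ} {p : ι → Prop}
    [DecidablePred p] (h : ∀ i ∈ s, f i % 2 = if p i then 1 else 0) :
    (∑ i ∈ s, f i) % 2 = #{i ∈ s | p i} % 2 := by
  rw [sum_nat_mod, sum_congr rfl h, sum_boole, Nat.cast_id]

theorem ne_neg_of_isChain (hcomp : HasNoComplementaryEdge n lab) {C : Finset (Finset ℤ)}
    (hC : C ⊆ signedSets n) (hch : IsChain (· ⊆ ·) (C : Set (Finset ℤ))) :
    ∀ x ∈ C, ∀ y ∈ C, lab x ≠ -lab y := by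
  intro x hx y hy
  by_cases hxy : x = y
  · exact hxy ▸ hcomp x (hC hx) x (hC hx) subset_rfl
  rcases hch hx hy hxy with h | h
  · exact hcomp x (hC hx) y (hC hy) h
  · have := hcomp y (hC hy) x (hC hx) h
    omega

/-- Combinatorial Stokes formula: double count the pairs of a full chain of the hemisphere and an
alternating facet of it. -/
theorem hemisphereAltChainCount_mod_two (hjn : j + 1 ≤ n)
    (hcomp : HasNoComplementaryEdge n lab) :
    hemisphereAltChainCount lab (j + 1) % 2 = altChainCount lab j % 2 := by
  set S := chains (j + 1) (hemisphere (j + 1))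
  set T := {F ∈ chains j (hemisphere (j + 1)) | IsAlternatingOn lab F}
  have hS : ∀ C ∈ S, #(T.bipartiteAbove (fun C F => F ⊆ C) C) % 2 =
      if IsAlternatingOn lab C ∨ IsAlternatingOn (-lab) C then 1 else 0 := by
    intro C hC
    obtain ⟨hCH, hCcard, hCch⟩ := mem_chains.1 hC
    rw [bipartiteAbove, filter_filter, card_filter_chains_subset hC]
    refine card_filter_isAlternatingOn_erase_mod_two (card_pos.1 (by omega))
      (ne_neg_of_isChain hcomp (fun x hx => ?_) hCch)
    exact signedSets_mono hjn (mem_filter.1 (hCH hx)).1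
  have hT : ∀ F ∈ T, #(S.bipartiteBelow (fun C F => F ⊆ C) F) % 2 =
      if F ⊆ signedSets j then 1 else 0 := by
    intro F hF
    rw [bipartiteBelow, card_filter_chains_superset (mem_filter.1 hF).1,
      card_chainExtensions_hemisphere (mem_filter.1 hF).1]
    split_ifs <;> rfl
  have hboundary : {F ∈ T | F ⊆ signedSets j} =
      {C ∈ chains j (signedSets j) | IsAlternatingOn lab C} := by
    ext F
    simp only [T, mem_filter, mem_chains]
    exact ⟨fun ⟨⟨⟨_, h⟩, h'⟩, h''⟩ => ⟨⟨h'', h⟩, h'⟩,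
      fun ⟨⟨h'', h⟩, h'⟩ =>
        ⟨⟨⟨h''.trans (signedSets_subset_hemisphere j), h⟩, h'⟩, h''⟩⟩
  calc hemisphereAltChainCount lab (j + 1) % 2
      = (∑ C ∈ S, #(T.bipartiteAbove (fun C F => F ⊆ C) C)) % 2 :=
        (sum_mod_two_eq_card_filter hS).symm
    _ = (∑ F ∈ T, #(S.bipartiteBelow (fun C F => F ⊆ C) F)) % 2 := by
        rw [sum_card_bipartiteAbove_eq_sum_card_bipartiteBelow]
    _ = altChainCount lab j % 2 := by
        rw [sum_mod_two_eq_card_filter hT, hboundary, altChainCount]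

theorem neg_mem_chains {t : ℕ} {C : Finset (Finset ℤ)} (hC : C ∈ chains t (signedSets j)) :
    -C ∈ chains t (signedSets j) := by
  obtain ⟨hCS, hCcard, hCch⟩ := mem_chains.1 hC
  refine mem_chains.2 ⟨fun x hx => ?_, by rw [card_neg, hCcard], fun x hx y hy hxy => ?_⟩
  · simpa using neg_mem_signedSets (hCS (mem_neg'.1 hx))
  · rw [mem_coe, mem_neg'] at hx hy
    rcases hCch hx hy (neg_injective.ne hxy) with h | h
    · exact Or.inl (by simpa using neg_subset_neg h)
    · exact Or.inr (by simpa using neg_subset_neg h)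

theorem isAlternatingOn_neg_iff (hodd : IsAntipodal n lab)
    {C : Finset (Finset ℤ)} (hC : C ⊆ signedSets n) :
    IsAlternatingOn lab (-C) ↔ IsAlternatingOn (-lab) C := by
  rw [← image_neg_eq_neg, isAlternatingOn_image_iff (g := -lab) neg_injective.injOn
    fun x hx => hodd x (hC hx)]

theorem mem_chains_hemisphere {t : ℕ} {C : Finset (Finset ℤ)} :
    C ∈ chains t (hemisphere j) ↔
      C ∈ chains t (signedSets j) ∧ ∀ x ∈ C, -(j : ℤ) ∉ x := by
  simp only [mem_chains, hemisphere, subset_iff, mem_filter]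
  grind

theorem exists_mem_card_eq {C : Finset (Finset ℤ)} (hC : C ∈ chains j (signedSets j))
    (hj : 1 ≤ j) : ∃ x ∈ C, #x = j := by
  obtain ⟨hCS, hCcard, hCch⟩ := mem_chains.1 hC
  have : C.image card = Icc 1 j := eq_of_subset_of_card_le (image_card_subset_Icc hCS)
    (by rw [card_image_of_injOn hCch.injOn_card, hCcard, Nat.card_Icc, Nat.add_sub_cancel])
  exact mem_image.1 (this ▸ mem_Icc.2 ⟨hj, le_rfl⟩)

/-- A full chain passes through exactly one of `j` and `-j`. -/
theorem forall_notMem_neg_iff {C : Finset (Finset ℤ)} (hC : C ∈ chains j (signedSets j))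
    (hj : 1 ≤ j) : (∀ x ∈ -C, -(j : ℤ) ∉ x) ↔ ¬∀ x ∈ C, -(j : ℤ) ∉ x := by
  obtain ⟨hCS, -, hCch⟩ := mem_chains.1 hC
  have hone : ∃ x ∈ C, (j : ℤ) ∈ x ∨ -(j : ℤ) ∈ x := by
    obtain ⟨x, hx, hx_card⟩ := exists_mem_card_eq hC hj
    have : j ∈ x.image Int.natAbs := by
      rw [(mem_signedSets.1 (hCS hx)).2.image_natAbs_eq hx_card]
      exact mem_Icc.2 ⟨hj, le_rfl⟩
    obtain ⟨a, ha, ha_abs⟩ := mem_image.1 this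
    exact ⟨x, hx, by rcases Int.natAbs_eq a with h | h <;> rw [ha_abs] at h <;> simp_all⟩
  have hnot : ∀ x ∈ C, ∀ y ∈ C, (j : ℤ) ∈ x → -(j : ℤ) ∉ y := by
    intro x hx y hy hjx hjy
    have hsub : ∀ z ∈ C, ∀ a ∈ z, -a ∉ z := fun z hz => (mem_signedSets.1 (hCS hz)).2.2
    by_cases hxy : x = y
    · exact hsub x hx _ hjx (hxy ▸ hjy)
    rcases hCch hx hy hxy with h | h
    · exact hsub y hy _ (h hjx) hjy
    · exact hsub x hx _ hjx (h hjy)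
  rw [← image_neg_eq_neg, forall_mem_image]
  simp only [mem_neg', neg_neg]
  grind

/-- Negation exchanges the alternating chains through `-j` with the negatively alternating
chains through `j`. -/
theorem altChainCount_eq_hemisphereAltChainCount (hjn : j + 1 ≤ n)
    (hodd : IsAntipodal n lab) :
    altChainCount lab (j + 1) = hemisphereAltChainCount lab (j + 1) := by
  set S := chains (j + 1) (signedSets (j + 1))
  set N : ℤ := ((j + 1 : ℕ) : ℤ)
  have hodd' : IsAntipodal (j + 1) (-lab) := fun x hx => by
    simp [hodd x (signedSets_mono hjn hx)]
  have hswap : #{C ∈ S | IsAlternatingOn lab C ∧ ¬∀ x ∈ C, -N ∉ x} =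
      #{C ∈ S | IsAlternatingOn (-lab) C ∧ ∀ x ∈ C, -N ∉ x} := by
    refine card_nbij' (fun C => -C) (fun C => -C) (fun C hC => ?_) (fun C hC => ?_)
      (fun C _ => neg_neg C) (fun C _ => neg_neg C)
    · obtain ⟨hCS, hAlt, hN⟩ := mem_filter.1 hC
      have hCS' := (mem_chains.1 hCS).1
      refine mem_filter.2 ⟨neg_mem_chains hCS, ?_, (forall_notMem_neg_iff hCS (by omega)).2 hN⟩
      rwa [isAlternatingOn_neg_iff hodd' hCS', neg_neg]
    · obtain ⟨hCS, hAlt, hN⟩ := mem_filter.1 hC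
      have hCS' := (mem_chains.1 hCS).1
      refine mem_filter.2 ⟨neg_mem_chains hCS, ?_, ?_⟩
      · rwa [isAlternatingOn_neg_iff (lab := lab) (n := j + 1)
          (fun x hx => hodd x (signedSets_mono hjn hx)) hCS']
      · rw [← forall_notMem_neg_iff (neg_mem_chains hCS) (by omega), neg_neg]
        exact hN
  have hdisj : Disjoint {C ∈ S | IsAlternatingOn lab C ∧ ∀ x ∈ C, -N ∉ x}
      {C ∈ S | IsAlternatingOn (-lab) C ∧ ∀ x ∈ C, -N ∉ x} := by
    refine disjoint_filter.2 fun C hC h h' => h.1.not_neg ?_ h'.1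
    exact card_pos.1 (by rw [(mem_chains.1 hC).2.1]; omega)
  rw [altChainCount, ← card_filter_add_card_filter_not (p := fun C => ∀ x ∈ C, -N ∉ x),
    filter_filter, filter_filter, hswap, ← card_union_of_disjoint hdisj, ← filter_or,
    hemisphereAltChainCount]
  congr 1
  ext C
  simp only [mem_filter, mem_chains_hemisphere, S, N]
  tauto

theorem altChainCount_zero : altChainCount lab 0 = 1 := by
  have : chains 0 (signedSets 0) = {∅} := by
    ext C
    rw [mem_chains, mem_singleton, card_eq_zero]
    exact ⟨fun h => h.2.1, by rintro rfl; simp⟩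
  rw [altChainCount, this, filter_singleton, if_pos (isAlternatingOn_empty lab), card_singleton]

/-- Ky Fan's lemma for the octahedral subdivision. -/
theorem altChainCount_mod_two (hodd : IsAntipodal n lab)
    (hcomp : HasNoComplementaryEdge n lab) :
    ∀ j ≤ n, altChainCount lab j % 2 = 1
  | 0, _ => by rw [altChainCount_zero]
  | j + 1, hj => by
    rw [altChainCount_eq_hemisphereAltChainCount hj hodd,
      hemisphereAltChainCount_mod_two hj hcomp, altChainCount_mod_two hodd hcomp j (by omega)]

/-- The octahedral Tucker lemma. -/
theorem le_of_antipodal_labelling (hodd : IsAntipodal n lab)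
    (hcomp : HasNoComplementaryEdge n lab) {m : ℕ}
    (hm : ∀ x ∈ signedSets n, (lab x).natAbs ≤ m) : n ≤ m := by
  obtain ⟨C, hC⟩ : {C ∈ chains n (signedSets n) | IsAlternatingOn lab C}.Nonempty := by
    rw [← card_pos]
    have := altChainCount_mod_two hodd hcomp n le_rfl
    rw [altChainCount] at this
    omega
  obtain ⟨hCn, hinj, -⟩ := mem_filter.1 hC
  obtain ⟨hCS, hCcard, -⟩ := mem_chains.1 hCn
  have hsub : C.image (fun x => (lab x).natAbs) ⊆ Icc 1 m := fun c hc => by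
    obtain ⟨x, hx, rfl⟩ := mem_image.1 hc
    have := hcomp x (hCS hx) x (hCS hx) subset_rfl
    have := hm x (hCS hx)
    rw [mem_Icc]
    omega
  simpa [card_image_of_injOn hinj, hCcard] using card_le_card hsub

end Tucker

section MinAbs

variable {n : ℕ} {x : Finset ℤ}

noncomputable def minAbs (x : Finset ℤ) : ℕ := sInf (Int.natAbs '' (x : Set ℤ))

theorem exists_natAbs_eq_minAbs (hx : x.Nonempty) : ∃ a ∈ x, a.natAbs = minAbs x :=
  Nat.sInf_mem ((coe_nonempty.2 hx).image _)

theorem minAbs_le {a : ℤ} (ha : a ∈ x) : minAbs x ≤ a.natAbs :=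
  Nat.sInf_le ⟨a, ha, rfl⟩

theorem minAbs_neg (x : Finset ℤ) : minAbs (-x) = minAbs x := by
  rw [minAbs, minAbs, coe_neg, ← Set.image_neg_eq_neg, Set.image_image]
  simp

theorem natCast_minAbs_mem_iff (hx : x ∈ signedSets n) :
    (minAbs x : ℤ) ∈ x ↔ -(minAbs x : ℤ) ∉ x := by
  obtain ⟨hne, hsigned⟩ := mem_signedSets.1 hx
  obtain ⟨a, ha, ha_abs⟩ := exists_natAbs_eq_minAbs hne
  refine ⟨fun h h' => hsigned.2 _ h h', fun h => ?_⟩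
  rcases Int.natAbs_eq a with h' | h' <;> rw [ha_abs] at h'
  · exact h' ▸ ha
  · exact absurd (h' ▸ ha) h

noncomputable def minAbsSign (x : Finset ℤ) : ℤ := if (minAbs x : ℤ) ∈ x then 1 else -1

theorem minAbsSign_neg (hx : x ∈ signedSets n) : minAbsSign (-x) = -minAbsSign x := by
  have h := natCast_minAbs_mem_iff hx
  rw [minAbsSign, minAbsSign, minAbs_neg]
  simp only [mem_neg']
  split_ifs <;> simp_all

theorem natAbs_minAbsSign (x : Finset ℤ) : (minAbsSign x).natAbs = 1 := by
  rw [minAbsSign]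
  split_ifs <;> rfl

theorem one_le_minAbs {A : Finset ℤ} (hA : A ∈ signedSets n) : 1 ≤ minAbs A := by
  obtain ⟨a, ha, ha_abs⟩ := exists_natAbs_eq_minAbs (mem_signedSets.1 hA).1
  have := ((mem_signedSets.1 hA).2.1 a ha).1
  omega

theorem minAbs_add_le {k : ℕ} (hk : 1 ≤ k) {A : Finset ℤ} (hA : IsSignedKSubset n k A) :
    minAbs A + k ≤ n + 1 := by
  obtain ⟨hcard, hsigned⟩ := isSignedKSubset_iff.1 hA
  obtain ⟨a, ha, ha_abs⟩ := exists_natAbs_eq_minAbs (x := A) (card_pos.1 (by omega))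
  have := (hsigned.1 a ha).2
  have hsub : A.image Int.natAbs ⊆ Icc (minAbs A) n := fun c hc => by
    obtain ⟨a, ha, rfl⟩ := mem_image.1 hc
    exact mem_Icc.2 ⟨minAbs_le ha, (hsigned.1 a ha).2⟩
  have := card_le_card hsub
  rw [hsigned.card_image_natAbs, hcard, Nat.card_Icc] at this
  omega

end MinAbs

instance (n k : ℕ) : Finite (KSVertex n k) :=
  Set.Finite.to_subtype (s := {A | IsSignedKSubset n k A}) <|
    (Icc (-n : ℤ) n).powerset.finite_toSet.subset fun A hA => by
      rw [mem_coe, mem_powerset]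
      intro a ha
      have := (hA.2.1 a ha).2
      rw [mem_Icc]
      omega

noncomputable instance (n k : ℕ) : Fintype (KSVertex n k) := Fintype.ofFinite _

section Labelling

-- `c` colours the vertices and `r v ∈ {v, -v}` is the copy of `v` chosen by a switching.
variable {n k p : ℕ} (c : KSVertex n k → ℕ) (r : KSVertex n k → Finset ℤ)
  {x y : Finset ℤ}

noncomputable def maxColour (x : Finset ℤ) : ℕ :=
  (univ.filter fun v : KSVertex n k => v.1 ⊆ x ∨ v.1 ⊆ -x).sup c

/-- Decides the sign of the label of a large set `x`. -/
def MaxColourIn (x : Finset ℤ) : Prop :=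
  ∃ v, c v = maxColour c x ∧ r v ⊆ x

noncomputable def colouringLabel (x : Finset ℤ) : ℤ :=
  if #x < k then minAbsSign x * #x
  else (if MaxColourIn c r x then 1 else -1) * (k + maxColour c x)

theorem maxColour_neg (x : Finset ℤ) : maxColour c (-x) = maxColour c x := by
  simp only [maxColour, neg_neg, or_comm]

theorem exists_eq_maxColour (hx : IsSignedSet n x) (hk : k ≤ #x) :
    ∃ v : KSVertex n k, (v.1 ⊆ x ∨ v.1 ⊆ -x) ∧ c v = maxColour c x := by
  obtain ⟨A, hAx, hA⟩ := exists_subset_card_eq hk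
  let w : KSVertex n k := ⟨A, isSignedKSubset_iff.2 ⟨hA, hx.subset hAx⟩⟩
  have hw : w ∈ univ.filter fun v : KSVertex n k => v.1 ⊆ x ∨ v.1 ⊆ -x :=
    mem_filter.2 ⟨mem_univ w, Or.inl hAx⟩
  obtain ⟨v, hv, hv_eq⟩ := exists_mem_eq_sup _ ⟨w, hw⟩ c
  exact ⟨v, by simpa using hv, hv_eq.symm⟩

variable {c r}

theorem maxColourIn_iff_not_neg (hr : ∀ v, r v = v.1 ∨ r v = -v.1)
    (hint : ∀ u v, c u = c v → ¬Disjoint (r u) (r v)) (hx : IsSignedSet n x) (hk : k ≤ #x) :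
    MaxColourIn c r x ↔ ¬MaxColourIn c r (-x) := by
  constructor
  · rintro ⟨u, hu, hux⟩ ⟨v, hv, hvx⟩
    rw [maxColour_neg] at hv
    exact hint u v (hu.trans hv.symm) (hx.disjoint_neg.mono hux hvx)
  · intro h
    obtain ⟨v, hv, hv_eq⟩ := exists_eq_maxColour c hx hk
    refine ⟨v, hv_eq, ?_⟩
    have : r v ⊆ x ∨ r v ⊆ -x := by
      rcases hr v with h' | h' <;> rw [h']
      · exact hv
      · exact hv.symm.imp (by simpa using neg_subset_neg ·) neg_subset_neg
    exact this.resolve_right fun h' => h ⟨v, by rw [maxColour_neg]; exact hv_eq, h'⟩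

theorem MaxColourIn.mono (hxy : x ⊆ y) (hM : maxColour c x = maxColour c y)
    (h : MaxColourIn c r x) : MaxColourIn c r y :=
  let ⟨v, hv, hvx⟩ := h
  ⟨v, hv.trans hM, hvx.trans hxy⟩

theorem colouringLabel_neg (hr : ∀ v, r v = v.1 ∨ r v = -v.1)
    (hint : ∀ u v, c u = c v → ¬Disjoint (r u) (r v)) (hx : x ∈ signedSets n) :
    colouringLabel c r (-x) = -colouringLabel c r x := by
  have hiff (h : ¬#x < k) := maxColourIn_iff_not_neg hr hint (mem_signedSets.1 hx).2 (not_lt.1 h)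
  rw [colouringLabel, colouringLabel, card_neg, maxColour_neg]
  split_ifs with hsmall h₁ h₂ h₂
  · rw [minAbsSign_neg hx, neg_mul]
  · exact absurd h₁ ((hiff hsmall).1 h₂)
  · ring
  · ring
  · exact absurd (not_not.1 (mt (hiff hsmall).2 h₂)) h₁

theorem natAbs_colouringLabel (x : Finset ℤ) :
    (colouringLabel c r x).natAbs = if #x < k then #x else k + maxColour c x := by
  rw [colouringLabel]
  split_ifs <;> simp [Int.natAbs_mul, natAbs_minAbsSign] <;> omega

theorem colouringLabel_ne_neg (hr : ∀ v, r v = v.1 ∨ r v = -v.1)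
    (hint : ∀ u v, c u = c v → ¬Disjoint (r u) (r v)) (hk : 1 ≤ k) (hx : x ∈ signedSets n)
    (hy : y ∈ signedSets n) (hxy : x ⊆ y) : colouringLabel c r x ≠ -colouringLabel c r y := by
  intro h
  have habs := congrArg Int.natAbs h
  rw [Int.natAbs_neg, natAbs_colouringLabel, natAbs_colouringLabel] at habs
  have hcard := card_le_card hxy
  have hpos := (mem_signedSets.1 hx).1.card_pos
  split_ifs at habs with hx' hy' hy'
  · obtain rfl := eq_of_subset_of_card_le hxy (by omega)
    have := natAbs_colouringLabel (c := c) (r := r) x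
    rw [if_pos hx'] at this
    omega
  · omega
  · omega
  have hM : maxColour c x = maxColour c y := by omega
  have hiff := maxColourIn_iff_not_neg hr hint (mem_signedSets.1 hx).2 (by omega)
  have hiff' := maxColourIn_iff_not_neg hr hint (mem_signedSets.1 hy).2 (by omega)
  rw [colouringLabel, colouringLabel, if_neg hx', if_neg hy', hM] at h
  by_cases h₁ : MaxColourIn c r x
  · have h₂ := h₁.mono hxy hM
    rw [if_pos h₁, if_pos h₂] at h
    omega
  · have hneg : MaxColourIn c r (-y) := (not_not.1 (mt hiff.2 h₁)).mono (neg_subset_neg hxy)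
      (by rw [maxColour_neg, maxColour_neg, hM])
    have h₂ : ¬MaxColourIn c r y := fun h₂ => hiff'.1 h₂ hneg
    rw [if_neg h₁, if_neg h₂] at h
    omega

theorem natAbs_colouringLabel_le (hc : ∀ v, c v < p) (hx : x ∈ signedSets n) :
    (colouringLabel c r x).natAbs ≤ k + p - 1 := by
  rw [natAbs_colouringLabel]
  split_ifs with hsmall
  · omega
  · obtain ⟨v, -, hv⟩ := exists_eq_maxColour c (mem_signedSets.1 hx).2 (not_lt.1 hsmall)
    have := hc v
    omega

theorem add_one_le_of_intersecting (hk : 1 ≤ k) (hc : ∀ v, c v < p)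
    (hr : ∀ v, r v = v.1 ∨ r v = -v.1) (hint : ∀ u v, c u = c v → ¬Disjoint (r u) (r v)) :
    n + 1 ≤ k + p := by
  have := le_of_antipodal_labelling (fun x hx => colouringLabel_neg hr hint hx)
    (fun x hx y hy hxy => colouringLabel_ne_neg hr hint hk hx hy hxy)
    (fun x hx => natAbs_colouringLabel_le hc hx)
  omega

end Labelling

section Balanced

variable {n k : ℕ}

/-- After switching by `X` every edge inside `S` is positive, so no two switched vertices of `S`
are disjoint. -/
theorem not_disjoint_of_isBalancedSet {S X : Set (KSVertex n k)}
    (hX : ∀ u ∈ S, ∀ v ∈ S, (ksPos u.1 v.1 → (u ∈ X ↔ v ∈ X)) ∧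
      (ksNeg u.1 v.1 → ¬(u ∈ X ↔ v ∈ X)))
    {u v : KSVertex n k} (hu : u ∈ S) (hv : v ∈ S) :
    ¬Disjoint (if u ∈ X then -u.1 else u.1) (if v ∈ X then -v.1 else v.1) := by
  intro hdisj
  obtain ⟨hpos, hneg⟩ := hX u hu v hv
  by_cases hu' : u ∈ X <;> by_cases hv' : v ∈ X <;>
    simp only [hu', hv', if_true, if_false] at hdisj hpos hneg
  · exact hneg (disjoint_left.2 fun a ha hb => disjoint_left.1 hdisj
      (show -a ∈ -u.1 by simpa using ha) (show -a ∈ -v.1 by simpa using hb)) trivial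
  · exact (hpos fun a ha h => disjoint_left.1 hdisj (mem_neg'.2 (by simpa using ha)) h).1 trivial
  · exact (hpos fun a ha h => disjoint_left.1 hdisj ha (mem_neg'.2 h)).2 trivial
  · exact hneg hdisj trivial

/-- The vertices whose least absolute value is `i` all contain `i` or `-i`; switching those
containing `-i` makes every edge between them positive. -/
theorem isBalancedSet_minAbs_eq (hk : 1 ≤ k) (i : ℕ) :
    IsBalancedSet (fun A B : KSVertex n k => ksPos A.1 B.1)
      (fun A B : KSVertex n k => ksNeg A.1 B.1) {v | minAbs v.1 = i} := by
  refine ⟨{v | -(i : ℤ) ∈ v.1}, fun u hu v hv => ?_⟩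
  have hone : ∀ w : KSVertex n k, minAbs w.1 = i → ((i : ℤ) ∈ w.1 ↔ -(i : ℤ) ∉ w.1) :=
    fun w hw => hw ▸ natCast_minAbs_mem_iff (mem_signedSets_of_isSignedKSubset hk w.2)
  have hu' := hone u hu
  have hv' := hone v hv
  simp only [Set.mem_ofPred_eq, ksPos, ksNeg]
  refine ⟨fun hpos => ⟨fun h => ?_, fun h => ?_⟩, fun hneg h => ?_⟩
  · by_contra h'
    exact hpos _ h (by simpa using hv'.2 h')
  · by_contra h'
    exact hpos _ (hu'.2 h') h
  · by_cases h' : -(i : ℤ) ∈ u.1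
    · exact disjoint_left.1 hneg h' (h.1 h')
    · exact disjoint_left.1 hneg (hu'.2 h') (hv'.2 (mt h.2 h'))

theorem exists_balanced_colouring (hk : 1 ≤ k) :
    ∃ f : KSVertex n k → Fin (n - k + 1), ∀ i,
      IsBalancedSet (fun A B : KSVertex n k => ksPos A.1 B.1)
        (fun A B : KSVertex n k => ksNeg A.1 B.1) (f ⁻¹' {i}) := by
  have hbound (v : KSVertex n k) : minAbs v.1 - 1 < n - k + 1 := by
    have := minAbs_add_le hk v.2
    have := one_le_minAbs (mem_signedSets_of_isSignedKSubset hk v.2)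
    omega
  refine ⟨fun v => ⟨minAbs v.1 - 1, hbound v⟩, fun i => ?_⟩
  convert isBalancedSet_minAbs_eq hk (i + 1) using 1
  ext v
  have := one_le_minAbs (mem_signedSets_of_isSignedKSubset hk v.2)
  simp only [Set.mem_preimage, Set.mem_singleton_iff, Fin.ext_iff, Set.mem_ofPred_eq]
  omega

end Balanced

end SignedKneser

open SignedKneser

/-- for all `n ≥ k ≥ 1`, `χ_b(KS(n,k)) = n−k+1`. -/
theorem signedKneser_balancedChromatic (n k : ℕ) (hk : 1 ≤ k) (hkn : k ≤ n) :
    balancedChromatic (fun A B : KSVertex n k => ksPos A.1 B.1)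
        (fun A B : KSVertex n k => ksNeg A.1 B.1) = n - k + 1 := by
  refine le_antisymm (Nat.sInf_le (exists_balanced_colouring hk))
    (le_csInf ⟨_, exists_balanced_colouring hk⟩ ?_)
  rintro p ⟨f, hf⟩
  choose X hX using hf
  have := add_one_le_of_intersecting (c := fun v => (f v : ℕ))
    (r := fun v => if v ∈ X (f v) then -v.1 else v.1) hk (fun v => (f v).2)
    (fun v => by split_ifs <;> simp)
    (fun u v huv => by
      have hfuv : f u = f v := Fin.ext huv
      simpa only [hfuv] using not_disjoint_of_isBalancedSet (hX (f u)) rfl hfuv.symm)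
  omega
end

section
/- For any vertex A of the half Schrijver signed graph ŜS(n,k), the family {B_i(n,k) : {i,−i} ∩ A = ∅} consists of n−k balanced sets covering all vertices of ŜS(n,k) except A; consequently χ_b(ŜS(n,k) − A) ≤ n−k. -/
/-- The vertices of the half Schrijver signed graph `ŜS(n,k)`: alternating signed `k`-subsets
whose smallest-absolute-value element is positive. -/
def HSSVertex (n k : ℕ) : Type :=
  {A : Finset ℤ // IsSignedKSubset n k A ∧ IsAlternating A ∧ FirstPos A}


lemma natAbs_injOn {A : Finset ℤ} (h : ∀ a ∈ A, -a ∉ A) :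
    Set.InjOn Int.natAbs A := by
  intro a ha b hb hab
  rcases Int.natAbs_eq_natAbs_iff.mp hab with h1 | h1
  · exact h1
  · exact absurd (show -a ∈ A by rw [show -a = b by omega]; exact hb) (h a ha)

lemma eq_of_same_abs {A B : Finset ℤ}
    (hA0 : ∀ a ∈ A, a ≠ 0) (hAalt : IsAlternating A) (hAfp : FirstPos A)
    (hB0 : ∀ b ∈ B, b ≠ 0) (hBalt : IsAlternating B) (hBfp : FirstPos B)
    (habs : A.image Int.natAbs = B.image Int.natAbs) : A = B := by
  have claim : ∀ m : ℕ, ∀ a ∈ A, ∀ b ∈ B, a.natAbs = m → b.natAbs = m → a = b := by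
    intro m
    induction m using Nat.strong_induction_on with
    | _ m ih =>
      intro a ha b hb ham hbm
      have ha0 := hA0 a ha
      have hb0 := hB0 b hb
      by_cases hmin : ∀ c ∈ A, m ≤ c.natAbs
      · have hminB : ∀ c ∈ B, m ≤ c.natAbs := by
          intro c hc
          have hmem : c.natAbs ∈ B.image Int.natAbs := Finset.mem_image_of_mem _ hc
          rw [← habs] at hmem
          obtain ⟨a', ha', he⟩ := Finset.mem_image.mp hmem
          exact he ▸ hmin a' ha'
        have hpa : 0 < a := hAfp a ha (fun c hc => ham ▸ hmin c hc)
        have hpb : 0 < b := hBfp b hb (fun c hc => hbm ▸ hminB c hc)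
        omega
      · push_neg at hmin
        obtain ⟨c0, hc0, hc0m⟩ := hmin
        set T := (A.image Int.natAbs).filter (· < m) with hT
        have hTne : T.Nonempty :=
          ⟨c0.natAbs, Finset.mem_filter.mpr ⟨Finset.mem_image_of_mem _ hc0, hc0m⟩⟩
        set m' := T.max' hTne with hm'
        have hm'T : m' ∈ T := T.max'_mem hTne
        have hm'lt : m' < m := (Finset.mem_filter.mp hm'T).2
        have hm'A : m' ∈ A.image Int.natAbs := (Finset.mem_filter.mp hm'T).1
        obtain ⟨a', ha', ha'm⟩ := Finset.mem_image.mp hm'A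
        have hm'B : m' ∈ B.image Int.natAbs := habs ▸ hm'A
        obtain ⟨b', hb', hb'm⟩ := Finset.mem_image.mp hm'B
        have heq : a' = b' := ih m' hm'lt a' ha' b' hb' ha'm hb'm
        have hgapA : ∀ c ∈ A, ¬(a'.natAbs < c.natAbs ∧ c.natAbs < a.natAbs) := by
          rintro c hc ⟨h1, h2⟩
          have hcT : c.natAbs ∈ T :=
            Finset.mem_filter.mpr ⟨Finset.mem_image_of_mem _ hc, by omega⟩
          have := T.le_max' _ hcT
          omega
        have hgapB : ∀ c ∈ B, ¬(b'.natAbs < c.natAbs ∧ c.natAbs < b.natAbs) := by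
          rintro c hc ⟨h1, h2⟩
          have hcA : c.natAbs ∈ A.image Int.natAbs := habs ▸ Finset.mem_image_of_mem _ hc
          have hcT : c.natAbs ∈ T := Finset.mem_filter.mpr ⟨hcA, by omega⟩
          have := T.le_max' _ hcT
          omega
        have hsA := hAalt a' ha' a ha (by omega) hgapA
        have hsB := hBalt b' hb' b hb (by omega) hgapB
        rw [← heq] at hsB
        omega
  ext x
  constructor
  · intro hx
    have hmem : x.natAbs ∈ B.image Int.natAbs := habs ▸ Finset.mem_image_of_mem _ hx
    obtain ⟨b, hb, hbe⟩ := Finset.mem_image.mp hmem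
    rw [claim x.natAbs x hx b hb rfl hbe]
    exact hb
  · intro hx
    have hmem : x.natAbs ∈ A.image Int.natAbs := habs ▸ Finset.mem_image_of_mem _ hx
    obtain ⟨a, ha, hae⟩ := Finset.mem_image.mp hmem
    rw [← claim x.natAbs a ha x hx hae rfl]
    exact ha

/-- for any vertex `A` of `ŜS(n,k)`, the family `{B_i(n,k) : {i,−i} ∩ A = ∅}`
consists of `n−k` balanced sets of `ŜS(n,k) − A` covering all vertices except `A`; hence
`χ_b(ŜS(n,k) − A) ≤ n−k`. -/
theorem halfSignedSchrijver_vertex_deleted (n k : ℕ) (hk : 1 ≤ k) (hkn : k ≤ n)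
    (A : HSSVertex n k) :
    (((Finset.Icc 1 n).filter
        (fun i : ℕ => (i : ℤ) ∉ A.1 ∧ -(i : ℤ) ∉ A.1)).card = n - k) ∧
    (∀ i ∈ (Finset.Icc 1 n).filter (fun i : ℕ => (i : ℤ) ∉ A.1 ∧ -(i : ℤ) ∉ A.1),
        IsBalancedSet (fun B C : {B : HSSVertex n k // B ≠ A} => ksPos B.1.1 C.1.1)
          (fun B C : {B : HSSVertex n k // B ≠ A} => ksNeg B.1.1 C.1.1)
          {B : {B : HSSVertex n k // B ≠ A} | (i : ℤ) ∈ B.1.1.1 ∨ -(i : ℤ) ∈ B.1.1.1}) ∧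
    (∀ B : HSSVertex n k, B ≠ A →
        ∃ i ∈ (Finset.Icc 1 n).filter (fun i : ℕ => (i : ℤ) ∉ A.1 ∧ -(i : ℤ) ∉ A.1),
          (i : ℤ) ∈ B.1 ∨ -(i : ℤ) ∈ B.1) ∧
    balancedChromatic (fun B C : {B : HSSVertex n k // B ≠ A} => ksPos B.1.1 C.1.1)
        (fun B C : {B : HSSVertex n k // B ≠ A} => ksNeg B.1.1 C.1.1) ≤ n - k := by
  classical
  have hAcard : A.1.card = k := A.2.1.1
  have hAbound := A.2.1.2.1
  have hAneg := A.2.1.2.2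
  set s := (Finset.Icc 1 n).filter
      (fun i : ℕ => (i : ℤ) ∉ A.1 ∧ -(i : ℤ) ∉ A.1) with hs
  have himg : (Finset.Icc 1 n).filter (fun i : ℕ => (i : ℤ) ∈ A.1 ∨ -(i : ℤ) ∈ A.1)
      = A.1.image Int.natAbs := by
    ext i
    simp only [Finset.mem_filter, Finset.mem_image, Finset.mem_Icc]
    constructor
    · rintro ⟨⟨h1, h2⟩, h3 | h3⟩
      · exact ⟨(i : ℤ), h3, by simp⟩
      · exact ⟨-(i : ℤ), h3, by simp⟩
    · rintro ⟨a, ha, rfl⟩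
      have h0 := hAbound a ha
      have h0' : a ≠ 0 := h0.1
      refine ⟨⟨by omega, h0.2⟩, ?_⟩
      rcases Int.natAbs_eq a with h | h
      · left; rw [← h]; exact ha
      · right; rw [show -((a.natAbs : ℕ) : ℤ) = a by omega]; exact ha
  have himgcard : (A.1.image Int.natAbs).card = k := by
    rw [Finset.card_image_of_injOn (natAbs_injOn hAneg), hAcard]
  have hsplit := Finset.card_filter_add_card_filter_not
    (s := Finset.Icc 1 n) (p := fun i : ℕ => (i : ℤ) ∉ A.1 ∧ -(i : ℤ) ∉ A.1)
  have hcompl : (Finset.Icc 1 n).filter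
      (fun i : ℕ => ¬((i : ℤ) ∉ A.1 ∧ -(i : ℤ) ∉ A.1))
      = (Finset.Icc 1 n).filter (fun i : ℕ => (i : ℤ) ∈ A.1 ∨ -(i : ℤ) ∈ A.1) := by
    ext i
    simp only [Finset.mem_filter]
    tauto
  have hscard : s.card = n - k := by
    rw [hcompl, himg, himgcard, ← hs] at hsplit
    have hIcc : (Finset.Icc 1 n).card = n := by
      rw [Nat.card_Icc]; omega
    rw [hIcc] at hsplit
    omega
  have part2 : ∀ i ∈ s,
      IsBalancedSet (fun B C : {B : HSSVertex n k // B ≠ A} => ksPos B.1.1 C.1.1)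
        (fun B C : {B : HSSVertex n k // B ≠ A} => ksNeg B.1.1 C.1.1)
        {B : {B : HSSVertex n k // B ≠ A} | (i : ℤ) ∈ B.1.1.1 ∨ -(i : ℤ) ∈ B.1.1.1} := by
    intro i _
    refine ⟨{B | (i : ℤ) ∈ B.1.1.1}, ?_⟩
    intro u hu v hv
    simp only [Set.mem_setOf_eq, Finset.mem_val] at hu hv ⊢
    constructor
    · intro hpos
      constructor
      · intro hui
        rcases hv with h | h
        · exact h
        · exact absurd h (hpos _ hui)
      · intro hvi
        rcases hu with h | h
        · exact h
        · exact absurd hvi (by simpa using hpos _ h)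
    · intro hneg hiff
      rcases hu with h | h
      · exact (Finset.disjoint_left.mp hneg h) (hiff.mp h)
      · have hiv : (i : ℤ) ∈ v.1.1.1 := by
          rcases hv with h' | h'
          · exact h'
          · exact absurd h' (Finset.disjoint_left.mp hneg h)
        exact (Finset.disjoint_left.mp hneg (hiff.mpr hiv)) hiv
  have part3 : ∀ B : HSSVertex n k, B ≠ A →
      ∃ i ∈ s, (i : ℤ) ∈ B.1 ∨ -(i : ℤ) ∈ B.1 := by
    intro B hBA
    by_contra hcon
    push_neg at hcon
    apply hBA
    apply Subtype.ext
    apply eq_of_same_abs (fun a ha => (B.2.1.2.1 a ha).1) B.2.2.1 B.2.2.2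
      (fun a ha => (A.2.1.2.1 a ha).1) A.2.2.1 A.2.2.2
    apply Finset.eq_of_subset_of_card_le
    · intro m hm
      obtain ⟨b, hb, rfl⟩ := Finset.mem_image.mp hm
      by_contra hmA
      have hb0 := B.2.1.2.1 b hb
      have hb0' : b ≠ 0 := hb0.1
      have hms : b.natAbs ∈ s := by
        rw [hs]
        refine Finset.mem_filter.mpr ⟨Finset.mem_Icc.mpr ⟨by omega, hb0.2⟩, ?_, ?_⟩
        · intro hA'; exact hmA (Finset.mem_image.mpr ⟨_, hA', by omega⟩)
        · intro hA'; exact hmA (Finset.mem_image.mpr ⟨_, hA', by omega⟩)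
      have hc := hcon _ hms
      rcases Int.natAbs_eq b with h | h
      · exact hc.1 (by rw [← h]; exact hb)
      · exact hc.2 (by rw [← h]; exact hb)
    · rw [himgcard, Finset.card_image_of_injOn (natAbs_injOn B.2.1.2.2), B.2.1.1]
  refine ⟨hscard, part2, part3, ?_⟩
  apply Nat.sInf_le
  have e : {x // x ∈ s} ≃ Fin s.card := s.equivFin
  refine ⟨fun B => Fin.cast hscard
    (e ⟨(part3 B.1 B.2).choose, (part3 B.1 B.2).choose_spec.1⟩), ?_⟩
  intro j
  obtain ⟨X, hX⟩ := part2 (e.symm (Fin.cast hscard.symm j)).1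
    (e.symm (Fin.cast hscard.symm j)).2
  refine ⟨X, ?_⟩
  have key : ∀ (B : {B : HSSVertex n k // B ≠ A}),
      Fin.cast hscard (e ⟨(part3 B.1 B.2).choose, (part3 B.1 B.2).choose_spec.1⟩) = j →
      B ∈ {C : {B : HSSVertex n k // B ≠ A} |
        (((e.symm (Fin.cast hscard.symm j)).1 : ℕ) : ℤ) ∈ C.1.1.1 ∨
        -(((e.symm (Fin.cast hscard.symm j)).1 : ℕ) : ℤ) ∈ C.1.1.1} := by
    intro B hB
    have h1 : (⟨(part3 B.1 B.2).choose, (part3 B.1 B.2).choose_spec.1⟩ : {x // x ∈ s})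
        = e.symm (Fin.cast hscard.symm j) := by
      apply e.injective
      rw [Equiv.apply_symm_apply]
      apply Fin.ext
      simpa [Fin.cast] using congrArg Fin.val hB
    have h2 := (part3 B.1 B.2).choose_spec.2
    rw [← h1]
    simpa [Set.mem_setOf_eq, Finset.mem_val] using h2
  intro u hu v hv
  exact hX u (key u hu) v (key v hv)
end

section
/- The only alternating signed k-subsets of [n] contained in A ∪ (−A), for an alternating signed k-subset A, are A and −A themselves. -/
/-!
An alternating set of integers on which the absolute value is injective is determined by its set of
absolute values together with the sign of any one of its elements: the sign is transported
between neighbours in absolute value, and so reaches every element. Since `B ⊆ A ∪ (−A)` and both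
sets have `k` elements, `B` has the same absolute values as `A`, and any `b ∈ B` lies in `A` or
in `−A`; hence `B = A` or `B = −A`.
-/

open Finset

theorem Finset.iff_of_forall_adjacent_iff {α β : Type*} [LinearOrder β] {s : Finset α} {f : α → β}
    (hf : Set.InjOn f s) (P : α → Prop)
    (hP : ∀ x ∈ s, ∀ y ∈ s, f x < f y → (∀ z ∈ s, ¬(f x < f z ∧ f z < f y)) → (P x ↔ P y)) :
    ∀ x ∈ s, ∀ y ∈ s, P x ↔ P y := by
  classical
  induction s using Finset.induction_on_max_value f with
  | empty => simp
  | insert a s ha hmax ih =>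
    have hlt : ∀ x ∈ s, f x < f a := fun x hx => (hmax x hx).lt_of_ne fun h =>
      ha (hf (mem_insert_of_mem hx) (mem_insert_self a s) h ▸ hx)
    have ih := ih (hf.mono (subset_insert a s)) fun x hx y hy hxy hgap =>
      hP x (mem_insert_of_mem hx) y (mem_insert_of_mem hy) hxy fun z hz => by
        rcases mem_insert.1 hz with rfl | hz
        · exact fun h => (hlt y hy).not_gt h.2
        · exact hgap z hz
    have iff_a : ∀ x ∈ s, P x ↔ P a := by
      intro x hx
      obtain ⟨m, hm, hm_max⟩ := s.exists_max_image f ⟨x, hx⟩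
      refine (ih x hx m hm).trans (hP m (mem_insert_of_mem hm) a (mem_insert_self a s) (hlt m hm) ?_)
      intro z hz ⟨hmz, hza⟩
      rcases mem_insert.1 hz with rfl | hz
      · exact hza.false
      · exact (hm_max z hz).not_gt hmz
    intro x hx y hy
    rcases mem_insert.1 hx with rfl | hxs <;> rcases mem_insert.1 hy with rfl | hys
    · rfl
    · exact (iff_a y hys).symm
    · exact iff_a x hxs
    · exact ih x hxs y hys

theorem injOn_natAbs_of_forall_neg_notMem {A : Finset ℤ} (hA : ∀ a ∈ A, -a ∉ A) :
    Set.InjOn Int.natAbs A := by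
  intro x hx y hy hxy
  rcases Int.natAbs_eq_natAbs_iff.1 hxy with h | rfl
  · exact h
  · exact absurd hx (hA y hy)

theorem image_natAbs_image_neg (A : Finset ℤ) :
    (A.image fun a => -a).image Int.natAbs = A.image Int.natAbs := by
  simp [image_image, Function.comp_def]

theorem injOn_natAbs_image_neg {A : Finset ℤ} (hA : Set.InjOn Int.natAbs A) :
    Set.InjOn Int.natAbs (A.image fun a => -a) := by
  intro x hx y hy hxy
  obtain ⟨a, ha, rfl⟩ := mem_image.1 hx
  obtain ⟨b, hb, rfl⟩ := mem_image.1 hy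
  rw [hA ha hb (by simpa using hxy)]

theorem IsAlternating.image_neg {A : Finset ℤ} (hA : IsAlternating A) (h0 : (0 : ℤ) ∉ A) :
    IsAlternating (A.image fun a => -a) := by
  simp only [IsAlternating, mem_image, forall_exists_index, and_imp, forall_apply_eq_imp_iff₂,
    Int.natAbs_neg]
  intro a ha b hb hab hgap
  have := hA a ha b hb hab hgap
  have ha0 : a ≠ 0 := fun h => h0 (h ▸ ha)
  have hb0 : b ≠ 0 := fun h => h0 (h ▸ hb)
  omega

theorem IsAlternating.subset_of_image_natAbs_eq {A B : Finset ℤ} (hA : IsAlternating A)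
    (hB : IsAlternating B) (hAinj : Set.InjOn Int.natAbs A) (hBinj : Set.InjOn Int.natAbs B)
    (himg : A.image Int.natAbs = B.image Int.natAbs) {x : ℤ} (hxA : x ∈ A) (hxB : x ∈ B) :
    A ⊆ B := by
  have partner : ∀ a ∈ A, ∃ b ∈ B, b.natAbs = a.natAbs := fun a ha =>
    mem_image.1 (himg ▸ mem_image_of_mem Int.natAbs ha)
  have mem_iff : ∀ a ∈ A, ∀ b ∈ B, b.natAbs = a.natAbs → (a ∈ B ↔ b = a) := fun a _ b hb hab =>
    ⟨fun ha => hBinj hb ha hab, fun h => h ▸ hb⟩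
  -- The partners in `B` of neighbours in `A` are neighbours in `B`; both pairs alternate in sign.
  have adjacent : ∀ a ∈ A, ∀ a' ∈ A, a.natAbs < a'.natAbs →
      (∀ c ∈ A, ¬(a.natAbs < c.natAbs ∧ c.natAbs < a'.natAbs)) → (a ∈ B ↔ a' ∈ B) := by
    intro a ha a' ha' hlt hgap
    obtain ⟨b, hb, hba⟩ := partner a ha
    obtain ⟨b', hb', hba'⟩ := partner a' ha'
    have hgapB : ∀ c ∈ B, ¬(b.natAbs < c.natAbs ∧ c.natAbs < b'.natAbs) := by
      intro c hc
      obtain ⟨c', hc', hcc'⟩ := mem_image.1 (himg ▸ mem_image_of_mem Int.natAbs hc)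
      rw [hba, hba', ← hcc']
      exact hgap c' hc'
    have hsignA := hA a ha a' ha' hlt hgap
    have hsignB := hB b hb b' hb' (by omega) hgapB
    rw [mem_iff a ha b hb hba, mem_iff a' ha' b' hb' hba']
    omega
  intro a ha
  exact (iff_of_forall_adjacent_iff hAinj (· ∈ B) adjacent x hxA a ha).1 hxB

theorem IsAlternating.eq_of_image_natAbs_eq {A B : Finset ℤ} (hA : IsAlternating A)
    (hB : IsAlternating B) (hAinj : Set.InjOn Int.natAbs A) (hBinj : Set.InjOn Int.natAbs B)
    (himg : A.image Int.natAbs = B.image Int.natAbs) {x : ℤ} (hxA : x ∈ A) (hxB : x ∈ B) :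
    A = B :=
  (hA.subset_of_image_natAbs_eq hB hAinj hBinj himg hxA hxB).antisymm
    (hB.subset_of_image_natAbs_eq hA hBinj hAinj himg.symm hxB hxA)

/-- if `A` is an alternating signed `k`-subset of `[n]`, then the only
alternating signed `k`-subsets of `[n]` contained in `A ∪ (−A)` are `A` and `−A`. -/
theorem alternating_subsets_of_union (n k : ℕ) (A B : Finset ℤ)
    (hA : IsSignedKSubset n k A) (hAalt : IsAlternating A)
    (hB : IsSignedKSubset n k B) (hBalt : IsAlternating B)
    (hsub : B ⊆ A ∪ A.image (fun a => -a)) :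
    B = A ∨ B = A.image (fun a => -a) := by
  obtain ⟨hAcard, hAmem, hAneg⟩ := hA
  obtain ⟨hBcard, -, hBneg⟩ := hB
  have hAinj := injOn_natAbs_of_forall_neg_notMem hAneg
  have hBinj := injOn_natAbs_of_forall_neg_notMem hBneg
  have himg : B.image Int.natAbs = A.image Int.natAbs := by
    refine eq_of_subset_of_card_le ?_ ?_
    · simpa [image_union, image_natAbs_image_neg] using image_subset_image (f := Int.natAbs) hsub
    · rw [card_image_of_injOn hAinj, card_image_of_injOn hBinj, hAcard, hBcard]
  rcases B.eq_empty_or_nonempty with rfl | ⟨b, hb⟩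
  · exact .inl (card_eq_zero.1 (hAcard.trans (hBcard.symm.trans card_empty))).symm
  rcases mem_union.1 (hsub hb) with hbA | hbA
  · exact .inl (hBalt.eq_of_image_natAbs_eq hAalt hBinj hAinj himg hb hbA)
  · have hA0 : (0 : ℤ) ∉ A := fun h => (hAmem 0 h).1 rfl
    exact .inr (hBalt.eq_of_image_natAbs_eq (hAalt.image_neg hA0) hBinj
      (injOn_natAbs_image_neg hAinj) (himg.trans (image_natAbs_image_neg A).symm) hb hbA)
end

section
/- Let p be an odd polynomial of degree 2d+1 (only odd-power terms) whose roots are exactly 0 and d pairs ±r with r ∈ [n] (all simple), where n = k+d. Then the set X = {i ∈ ±[n] : (−1)^i p(i) > 0} is an alternating signed k-subset of [n]. -/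
/-- let `p` be an odd polynomial of degree `2d+1` (only odd-power terms) whose
roots are exactly `0` together with `d` pairs `±r`, `r ∈ [n]`, all simple, where `n = k + d`.
Then `X = {i ∈ ±[n] : (−1)^i p(i) > 0}` is an alternating signed `k`-subset of `[n]`. -/
theorem oddPolynomial_positivity_set_alternating (d k n : ℕ) (hn : n = k + d) (hk : 1 ≤ k)
    (p : Polynomial ℝ)
    (hodd : ∀ m : ℕ, p.coeff m ≠ 0 → Odd m)
    (hdeg : p.degree = (2 * d + 1 : ℕ))
    (R : Finset ℕ) (hR : R ⊆ Finset.Icc 1 n) (hRcard : R.card = d)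
    (hroots : p.roots =
      0 ::ₘ (R.val.map (fun r => (r : ℝ)) + R.val.map (fun r => -(r : ℝ))))
    (X : Finset ℤ)
    (hX : ∀ i : ℤ, i ∈ X ↔
      (i ≠ 0 ∧ i.natAbs ≤ n ∧ 0 < (-1 : ℝ) ^ i.natAbs * p.eval (i : ℝ))) :
    IsSignedKSubset n k X ∧ IsAlternating X := by
  classical
  have hp0 : p ≠ 0 := by
    intro h
    rw [h, Polynomial.degree_zero] at hdeg
    exact absurd hdeg.symm (by exact_mod_cast WithBot.natCast_ne_bot _)
  have hroots' : p.roots =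
      0 ::ₘ (R.val.map Nat.cast + R.val.map (fun r : ℕ => -(r : ℝ))) := by
    rw [hroots]; simp [Multiset.bind_singleton]
  set C := p.leadingCoeff with hCdef
  have hC : C ≠ 0 := Polynomial.leadingCoeff_ne_zero.mpr hp0
  have hnd : p.natDegree = 2 * d + 1 := Polynomial.natDegree_eq_of_degree_eq_some hdeg
  have hcard : Multiset.card p.roots = p.natDegree := by
    rw [hroots', hnd]
    simp [hRcard]
    ring
  have heval : ∀ x : ℝ, p.eval x = C * (x * ∏ r ∈ R, (x ^ 2 - (r : ℝ) ^ 2)) := by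
    intro x
    conv_lhs => rw [← Polynomial.C_leadingCoeff_mul_prod_multiset_X_sub_C hcard]
    rw [Polynomial.eval_mul, Polynomial.eval_C, Polynomial.eval_multiset_prod, Multiset.map_map,
      hroots', Multiset.map_cons, Multiset.map_add, Multiset.map_map, Multiset.map_map,
      Multiset.prod_cons, Multiset.prod_add]
    simp only [Function.comp_def, Polynomial.eval_sub, Polynomial.eval_X, Polynomial.eval_C,
      sub_zero, sub_neg_eq_add]
    have h1 : (Multiset.map (fun r : ℕ => x - (r : ℝ)) R.val).prod = ∏ r ∈ R, (x - (r : ℝ)) :=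
      rfl
    have h2 : (Multiset.map (fun r : ℕ => x + (r : ℝ)) R.val).prod = ∏ r ∈ R, (x + (r : ℝ)) :=
      rfl
    rw [h1, h2, ← Finset.prod_mul_distrib]
    rw [Finset.prod_congr rfl (fun r _ => by ring :
      ∀ r ∈ R, (x - (r : ℝ)) * (x + (r : ℝ)) = x ^ 2 - (r : ℝ) ^ 2)]
  have hoddeval : ∀ x : ℝ, p.eval (-x) = - p.eval x := by
    intro x
    rw [heval, heval]
    ring_nf
  have hzero : ∀ m : ℕ, m ∈ R → p.eval (m : ℝ) = 0 := by
    intro m hm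
    rw [heval, Finset.prod_eq_zero hm (sub_self ((m:ℝ)^2))]
    ring
  set N : ℕ → ℕ := fun m => (R.filter fun r => m < r).card with hN
  -- sign of p at a non-root integer m
  have hsign : ∀ m : ℕ, m ∉ R → ∃ t : ℝ, 0 < t ∧
      p.eval (m : ℝ) = (-1 : ℝ) ^ (N m) * (C * ((m : ℝ) * t)) := by
    intro m hm
    refine ⟨(∏ r ∈ R.filter (fun r => m < r), ((r : ℝ) ^ 2 - (m : ℝ) ^ 2)) *
      (∏ r ∈ R.filter (fun r => ¬ m < r), ((m : ℝ) ^ 2 - (r : ℝ) ^ 2)), ?_, ?_⟩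
    · apply mul_pos
      · apply Finset.prod_pos
        intro r hr
        have : m < r := (Finset.mem_filter.mp hr).2
        have hmr : (m : ℝ) < (r : ℝ) := by exact_mod_cast this
        nlinarith [Nat.cast_nonneg (α := ℝ) m]
      · apply Finset.prod_pos
        intro r hr
        have h1 : r ∈ R := (Finset.mem_filter.mp hr).1
        have h2 : ¬ m < r := (Finset.mem_filter.mp hr).2
        have hrm : r < m := lt_of_le_of_ne (not_lt.mp h2) (fun h => hm (h ▸ h1))
        have hrm' : (r : ℝ) < (m : ℝ) := by exact_mod_cast hrm
        nlinarith [Nat.cast_nonneg (α := ℝ) r]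
    · rw [heval]
      rw [← Finset.prod_filter_mul_prod_filter_not R (fun r => m < r)]
      rw [Finset.prod_congr rfl (fun r _ => by ring :
        ∀ r ∈ R.filter (fun r => m < r),
          ((m : ℝ) ^ 2 - (r : ℝ) ^ 2) = (-1) * ((r : ℝ) ^ 2 - (m : ℝ) ^ 2))]
      rw [Finset.prod_mul_distrib, Finset.prod_const]
      ring
  -- membership of ±m in X, for m a non-root in [1,n]
  have hmemX : ∀ m : ℕ, 1 ≤ m → m ≤ n → m ∉ R →
      (((m : ℤ) ∈ X ↔ 0 < (-1 : ℝ) ^ (m + N m) * C) ∧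
       ((-(m : ℤ)) ∈ X ↔ 0 < -((-1 : ℝ) ^ (m + N m) * C))) := by
    intro m h1 h2 hm
    obtain ⟨t, ht, hev⟩ := hsign m hm
    have hmt : 0 < (m : ℝ) * t := by positivity
    have e1 : (-1 : ℝ) ^ m * p.eval (m : ℝ) = ((-1 : ℝ) ^ (m + N m) * C) * ((m : ℝ) * t) := by
      rw [hev]; ring
    have e2 : (-1 : ℝ) ^ m * p.eval (-(m : ℝ)) =
        (-((-1 : ℝ) ^ (m + N m) * C)) * ((m : ℝ) * t) := by
      rw [hoddeval, hev]; ring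
    constructor
    · rw [hX]
      simp only [Int.natAbs_natCast, Int.cast_natCast]
      constructor
      · rintro ⟨-, -, h⟩
        rw [e1] at h
        by_contra h'
        push_neg at h'
        nlinarith
      · intro h
        refine ⟨by exact_mod_cast (by omega : m ≠ 0), h2, ?_⟩
        rw [e1]
        exact mul_pos h hmt
    · rw [hX]
      simp only [Int.natAbs_neg, Int.natAbs_natCast, Int.cast_neg, Int.cast_natCast]
      constructor
      · rintro ⟨-, -, h⟩
        rw [e2] at h
        by_contra h'
        push_neg at h'
        nlinarith
      · intro h
        refine ⟨?_, h2, ?_⟩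
        · simp only [ne_eq, neg_eq_zero]
          exact_mod_cast (by omega : m ≠ 0)
        · rw [e2]
          exact mul_pos h hmt
  have hC' : ∀ m : ℕ, (-1 : ℝ) ^ (m + N m) * C ≠ 0 :=
    fun m => mul_ne_zero (pow_ne_zero _ (by norm_num)) hC
  -- p vanishes at ±i when |i| ∈ R
  have hzeroInt : ∀ i : ℤ, i.natAbs ∈ R → p.eval (i : ℝ) = 0 := by
    intro i hi
    rcases Int.natAbs_eq i with h | h
    · rw [h, Int.cast_natCast]; exact hzero _ hi
    · rw [h, Int.cast_neg, Int.cast_natCast, hoddeval, hzero _ hi, neg_zero]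
  -- the image of X under natAbs
  have himg : X.image Int.natAbs = (Finset.Icc 1 n) \ R := by
    ext m
    simp only [Finset.mem_image, Finset.mem_sdiff, Finset.mem_Icc]
    constructor
    · rintro ⟨i, hi, rfl⟩
      rw [hX] at hi
      obtain ⟨h0, hle, hpos⟩ := hi
      refine ⟨⟨Int.natAbs_pos.mpr h0, hle⟩, fun hm => ?_⟩
      rw [hzeroInt i hm, mul_zero] at hpos
      exact lt_irrefl _ hpos
    · rintro ⟨⟨h1, h2⟩, hm⟩
      obtain ⟨hposm, hnegm⟩ := hmemX m h1 h2 hm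
      rcases lt_trichotomy (0 : ℝ) ((-1 : ℝ) ^ (m + N m) * C) with h | h | h
      · exact ⟨(m : ℤ), hposm.mpr h, Int.natAbs_natCast m⟩
      · exact absurd h.symm (hC' m)
      · exact ⟨-(m : ℤ), hnegm.mpr (by linarith), by simp⟩
  have hnegX : ∀ a ∈ X, -a ∉ X := by
    intro a ha hna
    rw [hX] at ha hna
    obtain ⟨h0, -, hp1⟩ := ha
    obtain ⟨-, -, hp2⟩ := hna
    rw [Int.natAbs_neg, Int.cast_neg, hoddeval, mul_neg] at hp2
    linarith
  have hinj : Set.InjOn Int.natAbs X := by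
    intro a ha b hb hab
    rcases Int.natAbs_eq_natAbs_iff.mp hab with h | h
    · exact h
    · exfalso
      exact hnegX b hb (h ▸ ha)
  have hcardX : X.card = k := by
    have h1 : X.card = ((Finset.Icc 1 n) \ R).card := by
      rw [← himg, Finset.card_image_of_injOn hinj]
    rw [h1, Finset.card_sdiff_of_subset hR, Nat.card_Icc, hRcard]
    omega
  refine ⟨⟨hcardX, fun a ha => ⟨((hX a).mp ha).1, ((hX a).mp ha).2.1⟩, hnegX⟩, ?_⟩
  -- alternation
  intro a ha b hb hab hno
  have hsmem : a.natAbs ∈ (Finset.Icc 1 n) \ R := by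
    rw [← himg]; exact Finset.mem_image_of_mem _ ha
  have htmem : b.natAbs ∈ (Finset.Icc 1 n) \ R := by
    rw [← himg]; exact Finset.mem_image_of_mem _ hb
  set s := a.natAbs with hs
  set t := b.natAbs with ht
  obtain ⟨hsIcc, hsR⟩ := Finset.mem_sdiff.mp hsmem
  obtain ⟨htIcc, htR⟩ := Finset.mem_sdiff.mp htmem
  obtain ⟨hs1, hs2⟩ := Finset.mem_Icc.mp hsIcc
  obtain ⟨ht1, ht2⟩ := Finset.mem_Icc.mp htIcc
  have hmid : ∀ m : ℕ, s < m → m < t → m ∈ R := by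
    intro m hm1 hm2
    by_contra hm
    have : m ∈ (Finset.Icc 1 n) \ R :=
      Finset.mem_sdiff.mpr ⟨Finset.mem_Icc.mpr ⟨by omega, by omega⟩, hm⟩
    rw [← himg] at this
    obtain ⟨c, hc, hcm⟩ := Finset.mem_image.mp this
    exact hno c hc (by omega)
  have hNs : N s = N t + (t - s - 1) := by
    have hset : R.filter (fun r => s < r) =
        (R.filter (fun r => t < r)) ∪ Finset.Icc (s + 1) (t - 1) := by
      ext r
      simp only [Finset.mem_filter, Finset.mem_union, Finset.mem_Icc]
      constructor
      · rintro ⟨hrR, hsr⟩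
        by_cases h : t < r
        · exact Or.inl ⟨hrR, h⟩
        · have hrt : r ≠ t := fun he => htR (he ▸ hrR)
          exact Or.inr ⟨by omega, by omega⟩
      · rintro (⟨hrR, htr⟩ | ⟨hr1, hr2⟩)
        · exact ⟨hrR, by omega⟩
        · exact ⟨hmid r (by omega) (by omega), by omega⟩
    have hdisj : Disjoint (R.filter (fun r => t < r)) (Finset.Icc (s + 1) (t - 1)) := by
      rw [Finset.disjoint_left]
      intro r hr hr'
      have h1 := (Finset.mem_filter.mp hr).2
      have h2 := Finset.mem_Icc.mp hr'
      omega
    rw [hN]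
    simp only
    rw [hset, Finset.card_union_of_disjoint hdisj, Nat.card_Icc]
    congr 1
    omega
  have hpar : s + N s + 1 = t + N t := by omega
  have hflip : (-1 : ℝ) ^ (t + N t) = -((-1 : ℝ) ^ (s + N s)) := by
    rw [← hpar, pow_succ]; ring
  obtain ⟨hsposm, hsnegm⟩ := hmemX s hs1 hs2 hsR
  obtain ⟨htposm, htnegm⟩ := hmemX t ht1 ht2 htR
  have ha0 : a ≠ 0 := ((hX a).mp ha).1
  have hb0 : b ≠ 0 := ((hX b).mp hb).1
  have haP : 0 < a ↔ 0 < (-1 : ℝ) ^ (s + N s) * C := by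
    constructor
    · intro h
      have : a = (s : ℤ) := by omega
      exact hsposm.mp (this ▸ ha)
    · intro h
      by_contra hle
      have : a = -(s : ℤ) := by omega
      have := hsnegm.mp (this ▸ ha)
      linarith
  have hbP : 0 < b ↔ 0 < (-1 : ℝ) ^ (t + N t) * C := by
    constructor
    · intro h
      have : b = (t : ℤ) := by omega
      exact htposm.mp (this ▸ hb)
    · intro h
      by_contra hle
      have : b = -(t : ℤ) := by omega
      have := htnegm.mp (this ▸ hb)
      linarith
  rw [haP]
  constructor
  · intro h
    by_contra hle
    have hbpos : 0 < b := by omega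
    have := hbP.mp hbpos
    rw [hflip] at this
    linarith
  · intro h
    rcases lt_trichotomy (0 : ℝ) ((-1 : ℝ) ^ (s + N s) * C) with h' | h' | h'
    · exact h'
    · exact absurd h'.symm (hC' s)
    · exfalso
      have hnb : ¬ 0 < b := by omega
      rw [hbP, hflip] at hnb
      push_neg at hnb
      rcases lt_trichotomy (0 : ℝ) (-((-1 : ℝ) ^ (s + N s) * C)) with h'' | h'' | h''
      · -- then -(..) * C > 0, consistent; but we assumed value < 0 so -value > 0, fine...
        linarith
      · exact absurd (by linarith : (-1 : ℝ) ^ (s + N s) * C = 0) (hC' s)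
      · linarith
end
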